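/- arXiv:1805.06196 — 12 statements merged into one kernel-verified Lean document; each statement's English description precedes it below -/
import Mathlib

section
/- Assume mo ⊆ W × W and that no externally-reading read is a write, i.e. toutR ∩ W = ∅ (this holds in particular when rf ⊆ W × R and R ∩ W = ∅). Then the relation (po_T ∪ rf_T ∪ mo_T) ; fr_T^? is acyclic if and only if the SI happens-before relation si-hb = (po_T ∪ rf_T ∪ mo_T ∪ si-rb)⁺ is irreflexive. (Consequently, an execution is SI-consistent — i.e. satisfies INT and acyclicity of (po_T ∪ rf_T ∪ mo_T) ; fr_T^? — if and only if INT holds and si-hb is irreflexive.) -/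
variable {E : Type*} {TxId : Type*} {Loc : Type*}

/-- Same-transaction relation: both events are transactional with equal transaction ids. -/
def St (tx : E → Option TxId) : E → E → Prop :=
  fun a b => ∃ t, tx a = some t ∧ tx b = some t

/-- Transaction lifting `r_T := st ; (r \ st) ; st`. -/
def RLift (tx : E → Option TxId) (r : E → E → Prop) : E → E → Prop :=
  fun a b => ∃ c d, St tx a c ∧ r c d ∧ ¬ St tx c d ∧ St tx d b

/-- Reads-before relation `fr := (rf⁻¹ ; mo) \ id`. -/
def Fr (rf mo : E → E → Prop) : E → E → Prop :=
  fun a b => (∃ w, rf w a ∧ mo w b) ∧ a ≠ b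

/-- Externally-reading reads: `toutR := codom (rf \ st)`. -/
def ToutR (tx : E → Option TxId) (rf : E → E → Prop) : Set E :=
  { b | ∃ a, rf a b ∧ ¬ St tx a b }

/-- `si-rb := [toutR] ; fr_T ; [W]`. -/
def SiRb (tx : E → Option TxId) (W : Set E) (rf mo : E → E → Prop) : E → E → Prop :=
  fun a b => a ∈ ToutR tx rf ∧ RLift tx (Fr rf mo) a b ∧ b ∈ W

/-- SI happens-before: `si-hb := (po_T ∪ rf_T ∪ mo_T ∪ si-rb)⁺`. -/
def SiHb (tx : E → Option TxId) (W : Set E) (po rf mo : E → E → Prop) : E → E → Prop :=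
  Relation.TransGen (fun a b =>
    RLift tx po a b ∨ RLift tx rf a b ∨ RLift tx mo a b ∨ SiRb tx W rf mo a b)

/-- Non-transactional events. -/
def NTset (tx : E → Option TxId) : Set E := { e | tx e = none }

/-- `rsi-po := (po \ po_i) ∪ ([W] ; po_i ; [W])`. -/
def RsiPo (tx : E → Option TxId) (W : Set E) (po : E → E → Prop) : E → E → Prop :=
  fun a b => (po a b ∧ ¬ St tx a b) ∨ (a ∈ W ∧ (po a b ∧ St tx a b) ∧ b ∈ W)

/-- `rsi-rf := (rf ; [NT]) ∪ ([NT] ; rf ; st) ∪ rf_T ∪ (mo ; rf)_T`. -/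
def RsiRf (tx : E → Option TxId) (rf mo : E → E → Prop) : E → E → Prop :=
  fun a b =>
    (rf a b ∧ b ∈ NTset tx) ∨
    (a ∈ NTset tx ∧ ∃ c, rf a c ∧ St tx c b) ∨
    RLift tx rf a b ∨
    RLift tx (fun x y => ∃ z, mo x z ∧ rf z y) a b

/-- RSI happens-before: `rsi-hb := (rsi-po ∪ rsi-rf ∪ mo_T ∪ si-rb)⁺`. -/
def RsiHb (tx : E → Option TxId) (W : Set E) (po rf mo : E → E → Prop) : E → E → Prop :=
  Relation.TransGen (fun a b =>
    RsiPo tx W po a b ∨ RsiRf tx rf mo a b ∨ RLift tx mo a b ∨ SiRb tx W rf mo a b)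

/-- Internal consistency axiom: `rf_i ∪ mo_i ∪ fr_i ⊆ po`. -/
def INTax (tx : E → Option TxId) (po rf mo : E → E → Prop) : Prop :=
  ∀ a b, (rf a b ∨ mo a b ∨ Fr rf mo a b) → St tx a b → po a b

/-- Acyclicity: the transitive closure is irreflexive. -/
def Acyclic (r : E → E → Prop) : Prop := ∀ a, ¬ Relation.TransGen r a a

/-- SI-consistency: INT together with acyclicity of `(po_T ∪ rf_T ∪ mo_T) ; fr_T^?`. -/
def SIConsistent (tx : E → Option TxId) (po rf mo : E → E → Prop) : Prop :=
  INTax tx po rf mo ∧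
  Acyclic (fun a c => ∃ b,
    (RLift tx po a b ∨ RLift tx rf a b ∨ RLift tx mo a b) ∧
    (RLift tx (Fr rf mo) b c ∨ b = c))

/-- RSI-consistency: INT together with acyclicity of `rsi-hb|loc ∪ mo ∪ fr`. -/
def RSIConsistent (tx : E → Option TxId) (W : Set E) (loc : E → Loc)
    (po rf mo : E → E → Prop) : Prop :=
  INTax tx po rf mo ∧
  Acyclic (fun a b =>
    (RsiHb tx W po rf mo a b ∧ loc a = loc b) ∨ mo a b ∨ Fr rf mo a b)


/-! Since `toutR ∩ W = ∅`, two `si-rb` edges never compose, so every `si-hb` cycle is a cycle of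
`(po_T ∪ rf_T ∪ mo_T) ; si-rb^?`, and `si-rb ⊆ fr_T`. Conversely, an `fr_T` edge from `b` is,
up to a final `st` step, an `mo_T` edge from `b` or an `si-rb` edge leaving `b`'s transaction,
according to whether the write it reads from lies in the reader's transaction; the trailing
`st` steps are absorbed by the lifted relation starting the next edge of the cycle. -/

open Relation

section Relations

variable {α : Type*} {a s c k t : α → α → Prop}

theorem transGen_or_cases_of_not_comp (hs : ∀ x y z, s x y → ¬ s y z) {x y : α}
    (h : TransGen (fun x y => a x y ∨ s x y) x y) :
    s x y ∨ ∃ m, ReflGen s x m ∧ TransGen (Comp a (ReflGen s)) m y := by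
  induction h using TransGen.head_induction_on with
  | @single x hxy =>
    rcases hxy with hxy | hxy
    · exact .inr ⟨x, .refl, .single ⟨y, hxy, .refl⟩⟩
    · exact .inl hxy
  | @head x z hxz _ ih =>
    rcases hxz with hxz | hxz
    · refine .inr ⟨x, .refl, ?_⟩
      rcases ih with hzy | ⟨m, hzm | hzm, hmy⟩
      · exact .single ⟨z, hxz, .single hzy⟩
      · exact .head ⟨z, hxz, .refl⟩ hmy
      · exact .head ⟨z, hxz, .single hzm⟩ hmy
    · rcases ih with hzy | ⟨m, hzm | hzm, hmy⟩
      · exact absurd hzy (hs x z y hxz)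
      · exact .inr ⟨z, .single hxz, hmy⟩
      · exact absurd hzm (hs x z m hxz)

theorem acyclic_or_of_acyclic_comp_reflGen (hs : ∀ x y z, s x y → ¬ s y z)
    (h : Acyclic (Comp a (ReflGen s))) : Acyclic (fun x y => a x y ∨ s x y) := by
  intro x hx
  rcases transGen_or_cases_of_not_comp hs hx with hxx | ⟨m, hxm | hxm, hmx⟩
  · exact hs x x x hxx hxx
  · exact h x hmx
  · obtain ⟨y, hmy, z, hyz, hzx⟩ := TransGen.tail'_iff.mp hmx
    cases hzx with
    | refl => exact h m (.tail' hmy ⟨x, hyz, .single hxm⟩)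
    | single hzx => exact hs z x m hzx hxm

theorem acyclic_of_le_comp (hk : ∀ x y z, k x y → k y z → k x z)
    (htk : ∀ x y z, t x y → k y z → k x z) (hc : ∀ x y, c x y → Comp k t x y) (h : ∀ x, ¬ k x x) : Acyclic c := by
  have hct : ∀ x y, TransGen c x y → Comp k t x y := by
    intro x y hxy
    induction hxy with
    | single hxy => exact hc _ _ hxy
    | tail _ hyz ih =>
      obtain ⟨m, hxm, hmy⟩ := ih
      obtain ⟨n, hyn, hnz⟩ := hc _ _ hyz
      exact ⟨n, hk _ _ _ hxm (htk _ _ _ hmy hyn), hnz⟩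
  intro x hx
  obtain ⟨m, hxm, hmx⟩ := hct x x hx
  exact h m (htk _ _ _ hmx hxm)

end Relations

section Transactions

variable {tx : E → Option TxId} {W : Set E} {r po rf mo : E → E → Prop} {a b c d : E}

theorem St.symm (h : St tx a b) : St tx b a :=
  let ⟨t, ha, hb⟩ := h; ⟨t, hb, ha⟩

theorem St.trans (hab : St tx a b) (hbc : St tx b c) : St tx a c := by
  obtain ⟨t, ha, hb⟩ := hab
  obtain ⟨s, hb', hc⟩ := hbc
  obtain rfl : t = s := Option.some.inj (hb.symm.trans hb')
  exact ⟨t, ha, hc⟩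

theorem RLift.of_st_left (hab : St tx a b) (h : RLift tx r b c) : RLift tx r a c :=
  let ⟨x, y, hbx, hxy, hnxy, hyc⟩ := h; ⟨x, y, hab.trans hbx, hxy, hnxy, hyc⟩

theorem RLift.of_st_right (h : RLift tx r a b) (hbc : St tx b c) : RLift tx r a c :=
  let ⟨x, y, hax, hxy, hnxy, hyb⟩ := h; ⟨x, y, hax, hxy, hnxy, hyb.trans hbc⟩

def PoRfMoT (tx : E → Option TxId) (po rf mo : E → E → Prop) : E → E → Prop :=
  fun a b => RLift tx po a b ∨ RLift tx rf a b ∨ RLift tx mo a b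

theorem PoRfMoT.of_st_left (hab : St tx a b) (h : PoRfMoT tx po rf mo b c) :
    PoRfMoT tx po rf mo a c := by
  rcases h with h | h | h
  exacts [.inl (h.of_st_left hab), .inr (.inl (h.of_st_left hab)),
    .inr (.inr (h.of_st_left hab))]

theorem PoRfMoT.of_st_right (h : PoRfMoT tx po rf mo a b) (hbc : St tx b c) :
    PoRfMoT tx po rf mo a c := by
  rcases h with h | h | h
  exacts [.inl (h.of_st_right hbc), .inr (.inl (h.of_st_right hbc)),
    .inr (.inr (h.of_st_right hbc))]

theorem not_siRb_of_siRb (htout : ToutR tx rf ∩ W = ∅) (hab : SiRb tx W rf mo a b) :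
    ¬ SiRb tx W rf mo b c := fun hbc =>
  Set.eq_empty_iff_forall_notMem.mp htout b ⟨hbc.1, hab.2.2⟩

theorem RLift.fr_cases (hmoW : ∀ a b, mo a b → b ∈ W)
    (h : RLift tx (Fr rf mo) a b) :
    ∃ d, St tx d b ∧ (RLift tx mo a d ∨ ∃ c, St tx a c ∧ SiRb tx W rf mo c d) := by
  obtain ⟨c, d, hac, ⟨⟨w, hwc, hwd⟩, hcd⟩, hncd, hdb⟩ := h
  have hdd : St tx d d := hdb.trans hdb.symm
  refine ⟨d, hdb, ?_⟩
  by_cases hwc' : St tx w c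
  · exact .inl ⟨w, d, hac.trans hwc'.symm, hwd, fun hwd' => hncd (hwc'.symm.trans hwd'), hdd⟩
  · exact .inr ⟨c, hac, ⟨w, hwc, hwc'⟩,
      ⟨c, d, hac.symm.trans hac, ⟨⟨w, hwc, hwd⟩, hcd⟩, hncd, hdd⟩, hmoW w d hwd⟩

theorem irreflexive_siHb_of_acyclic (htout : ToutR tx rf ∩ W = ∅)
    (h : Acyclic (fun a c => ∃ b, PoRfMoT tx po rf mo a b ∧ (RLift tx (Fr rf mo) b c ∨ b = c))) :
    ∀ x, ¬ SiHb tx W po rf mo x x := by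
  have hcomp : Acyclic (Comp (PoRfMoT tx po rf mo) (ReflGen (SiRb tx W rf mo))) := by
    refine fun x hx => h x (TransGen.mono (fun a c ⟨b, hab, hbc⟩ => ⟨b, hab, ?_⟩) _ _ hx)
    cases hbc with
    | refl => exact .inr rfl
    | single hbc => exact .inl hbc.2.1
  intro x hx
  refine acyclic_or_of_acyclic_comp_reflGen (s := SiRb tx W rf mo)
    (fun _ _ _ => not_siRb_of_siRb htout) hcomp x (TransGen.mono (fun a b hab => ?_) _ _ hx)
  unfold PoRfMoT
  tauto

theorem acyclic_of_irreflexive_siHb (hmoW : ∀ a b, mo a b → b ∈ W)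
    (h : ∀ x, ¬ SiHb tx W po rf mo x x) :
    Acyclic (fun a c => ∃ b, PoRfMoT tx po rf mo a b ∧ (RLift tx (Fr rf mo) b c ∨ b = c)) := by
  set step := fun a b =>
    RLift tx po a b ∨ RLift tx rf a b ∨ RLift tx mo a b ∨ SiRb tx W rf mo a b
  have hstep : ∀ a b, PoRfMoT tx po rf mo a b → step a b := fun a b hab => by
    unfold PoRfMoT at hab
    tauto
  refine acyclic_of_le_comp (k := Comp (PoRfMoT tx po rf mo) (ReflTransGen step))
    (t := ReflGen (St tx)) ?_ ?_ ?_ ?_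
  · rintro x y z ⟨m, hxm, hmy⟩ ⟨n, hyn, hnz⟩
    exact ⟨m, hxm, (hmy.tail (hstep y n hyn)).trans hnz⟩
  · rintro x y z (_ | hxy) hyz
    · exact hyz
    · obtain ⟨m, hym, hmz⟩ := hyz
      exact ⟨m, hym.of_st_left hxy, hmz⟩
  · rintro x y ⟨b, hxb, hby | rfl⟩
    · obtain ⟨d, hdy, hmo | ⟨c, hbc, hcd⟩⟩ := hby.fr_cases hmoW
      · exact ⟨d, ⟨b, hxb, .single (.inr (.inr (.inl hmo)))⟩, .single hdy⟩
      · exact ⟨d, ⟨c, hxb.of_st_right hbc, .single (.inr (.inr (.inr hcd)))⟩, .single hdy⟩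
    · exact ⟨b, ⟨b, hxb, .refl⟩, .refl⟩
  · rintro x ⟨m, hxm, hmx⟩
    exact h x (.head' (hstep x m hxm) hmx)

end Transactions

theorem stmt0_general {E TxId : Type*} (W : Set E) (tx : E → Option TxId)
    (po rf mo : E → E → Prop)
    (hmoWW : ∀ a b, mo a b → a ∈ W ∧ b ∈ W)
    (htout : ToutR tx rf ∩ W = ∅) :
    (Acyclic (fun a c => ∃ b,
        (RLift tx po a b ∨ RLift tx rf a b ∨ RLift tx mo a b) ∧
        (RLift tx (Fr rf mo) b c ∨ b = c)) ↔
      Irreflexive (SiHb tx W po rf mo)) ∧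
    (SIConsistent tx po rf mo ↔
      (INTax tx po rf mo ∧ Irreflexive (SiHb tx W po rf mo))) := by
  have hacyc_iff : Acyclic (fun a c => ∃ b,
      PoRfMoT tx po rf mo a b ∧ (RLift tx (Fr rf mo) b c ∨ b = c)) ↔
      ∀ x, ¬ SiHb tx W po rf mo x x :=
    ⟨irreflexive_siHb_of_acyclic htout, acyclic_of_irreflexive_siHb fun a b hab => (hmoWW a b hab).2⟩
  exact ⟨hacyc_iff, and_congr_right fun _ => hacyc_iff⟩

/-- Assuming `mo ⊆ W × W` and `toutR ∩ W = ∅`, the relation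
`(po_T ∪ rf_T ∪ mo_T) ; fr_T^?` is acyclic iff `si-hb` is irreflexive; consequently an
execution is SI-consistent iff INT holds and `si-hb` is irreflexive. -/
theorem stmt0 {E TxId : Type*} (R W : Set E) (tx : E → Option TxId)
    (po rf mo : E → E → Prop)
    (hmoWW : ∀ a b, mo a b → a ∈ W ∧ b ∈ W)
    (htout : ToutR tx rf ∩ W = ∅) :
    (Acyclic (fun a c => ∃ b,
        (RLift tx po a b ∨ RLift tx rf a b ∨ RLift tx mo a b) ∧
        (RLift tx (Fr rf mo) b c ∨ b = c)) ↔
      Irreflexive (SiHb tx W po rf mo)) ∧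
    (SIConsistent tx po rf mo ↔
      (INTax tx po rf mo ∧ Irreflexive (SiHb tx W po rf mo))) :=
  stmt0_general W tx po rf mo hmoWW htout
end

section
/- Assume: every event is transactional (tx e ≠ none for all e, i.e. NT = ∅); transactions form po-convex blocks, i.e. po_T ⊆ po; po is transitive and irreflexive; rf ⊆ W × R and loc a = loc b for every (a,b) ∈ rf; mo ⊆ W × W, loc a = loc b for every (a,b) ∈ mo, mo is transitive and irreflexive, and any two distinct writes to the same location are mo-comparable; and R ∩ W = ∅. Then the execution is SI-consistent if and only if it is RSI-consistent. -/
variable {E : Type*} {TxId : Type*} {Loc : Type*}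

/- ===== Auxiliary machinery ===== -/

section Aux

variable {tx : E → Option TxId}

lemma st_symm' {a b : E} (h : St tx a b) : St tx b a := by
  obtain ⟨t, h1, h2⟩ := h; exact ⟨t, h2, h1⟩

lemma st_trans' {a b c : E} (h : St tx a b) (h' : St tx b c) : St tx a c := by
  obtain ⟨t, h1, h2⟩ := h
  obtain ⟨t', h3, h4⟩ := h'
  rw [h2] at h3
  obtain rfl : t = t' := by injection h3
  exact ⟨t, h1, h4⟩

lemma st_refl' (htx : ∀ e, tx e ≠ none) (a : E) : St tx a a := by
  cases h : tx a with
  | none => exact absurd h (htx a)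
  | some t => exact ⟨t, h, h⟩

lemma rlift_resource {r : E → E → Prop} {a a' b : E}
    (h : RLift tx r a b) (h' : St tx a' a) : RLift tx r a' b := by
  obtain ⟨c, d, h1, h2, h3, h4⟩ := h
  exact ⟨c, d, st_trans' h' h1, h2, h3, h4⟩

lemma rlift_retarget {r : E → E → Prop} {a b b' : E}
    (h : RLift tx r a b) (h' : St tx b b') : RLift tx r a b' := by
  obtain ⟨c, d, h1, h2, h3, h4⟩ := h
  exact ⟨c, d, h1, h2, h3, st_trans' h4 h'⟩

lemma rlift_cross (htx : ∀ e, tx e ≠ none) {r : E → E → Prop} {a b : E}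
    (h : r a b) (hn : ¬ St tx a b) : RLift tx r a b :=
  ⟨a, b, st_refl' htx a, h, hn, st_refl' htx b⟩

lemma rlift_not_st {r : E → E → Prop} {a b : E} (h : RLift tx r a b) : ¬ St tx a b := by
  obtain ⟨c, d, h1, _, h3, h4⟩ := h
  exact fun hab => h3 (st_trans' (st_trans' (st_symm' h1) hab) (st_symm' h4))

end Aux

/-- `A := po_T ∪ rf_T ∪ mo_T`. -/
abbrev Agen (tx : E → Option TxId) (po rf mo : E → E → Prop) : E → E → Prop :=
  fun a b => RLift tx po a b ∨ RLift tx rf a b ∨ RLift tx mo a b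

/-- One step of the SI acyclicity relation `A ; fr_T^?`. -/
abbrev SIstep (tx : E → Option TxId) (po rf mo : E → E → Prop) : E → E → Prop :=
  fun a c => ∃ b, Agen tx po rf mo a b ∧ (RLift tx (Fr rf mo) b c ∨ b = c)

/-- Generator of rsi-hb. -/
abbrev Pgen (tx : E → Option TxId) (W : Set E) (po rf mo : E → E → Prop) : E → E → Prop :=
  fun a b => RsiPo tx W po a b ∨ RsiRf tx rf mo a b ∨ RLift tx mo a b ∨ SiRb tx W rf mo a b

/-- Typed lifted fr edge: source a read, target a write. -/
abbrev CBrel (tx : E → Option TxId) (R W : Set E) (rf mo : E → E → Prop) : E → E → Prop :=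
  fun a b => RLift tx (Fr rf mo) a b ∧ a ∈ R ∧ b ∈ W

/-- Decomposition alphabet for RSI cycles: internal edges, A-edges, typed fr_T edges. -/
abbrev Vrel (tx : E → Option TxId) (R W : Set E) (po rf mo : E → E → Prop) : E → E → Prop :=
  fun a b => (po a b ∧ St tx a b ∧ b ∈ W) ∨ Agen tx po rf mo a b ∨ CBrel tx R W rf mo a b

/-- Path summary: SIstep-chain ending with a dangling A-edge. -/
abbrev GA (tx : E → Option TxId) (po rf mo : E → E → Prop) : E → E → Prop :=
  fun x y => ∃ m, Relation.ReflTransGen (SIstep tx po rf mo) x m ∧ Agen tx po rf mo m y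

/-- Path summary: SIstep-chain ending with A followed by a typed fr_T edge. -/
abbrev GB (tx : E → Option TxId) (R W : Set E) (po rf mo : E → E → Prop) : E → E → Prop :=
  fun x y => ∃ m b, Relation.ReflTransGen (SIstep tx po rf mo) x m ∧
    Agen tx po rf mo m b ∧ CBrel tx R W rf mo b y

/-- Full summary of a (nonempty) Vrel-path. -/
abbrev Summ (tx : E → Option TxId) (R W : Set E) (po rf mo : E → E → Prop) : E → E → Prop :=
  fun x y => (po x y ∧ St tx x y ∧ y ∈ W) ∨
    (GA tx po rf mo x y ∨ GB tx R W po rf mo x y) ∨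
    (∃ m, CBrel tx R W rf mo x m ∧ (m = y ∨ GA tx po rf mo m y ∨ GB tx R W po rf mo m y))

lemma transGen_closure {r s : E → E → Prop} (h : ∀ a b, r a b → Relation.TransGen s a b)
    {a b : E} (hab : Relation.TransGen r a b) : Relation.TransGen s a b := by
  induction hab with
  | single h1 => exact h _ _ h1
  | tail _ h2 ih => exact ih.trans (h _ _ h2)

/-- in the absence of non-transactional events (under the listed
well-formedness assumptions), SI-consistency and RSI-consistency coincide. -/
theorem stmt1 {E TxId Loc : Type*} (R W : Set E) (loc : E → Loc)
    (tx : E → Option TxId) (po rf mo : E → E → Prop)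
    (htx : ∀ e, tx e ≠ none)
    (hconv : ∀ a b, RLift tx po a b → po a b)
    (hpotrans : Transitive po) (hpoirr : Irreflexive po)
    (hrfWR : ∀ a b, rf a b → a ∈ W ∧ b ∈ R)
    (hrfloc : ∀ a b, rf a b → loc a = loc b)
    (hmoWW : ∀ a b, mo a b → a ∈ W ∧ b ∈ W)
    (hmoloc : ∀ a b, mo a b → loc a = loc b)
    (hmotrans : Transitive mo) (hmoirr : Irreflexive mo)
    (hmototal : ∀ a b, a ∈ W → b ∈ W → loc a = loc b → a ≠ b → mo a b ∨ mo b a)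
    (hRW : R ∩ W = ∅) :
    SIConsistent tx po rf mo ↔ RSIConsistent tx W loc po rf mo := by
  have hRWf : ∀ c, c ∈ R → c ∈ W → False := by
    intro c h1 h2
    have hc : c ∈ R ∩ W := ⟨h1, h2⟩
    rw [hRW] at hc
    exact hc
  have agen_retarget : ∀ {m y w : E}, Agen tx po rf mo m y → St tx y w →
      Agen tx po rf mo m w := by
    rintro m y w (h | h | h) hst
    · exact Or.inl (rlift_retarget h hst)
    · exact Or.inr (Or.inl (rlift_retarget h hst))
    · exact Or.inr (Or.inr (rlift_retarget h hst))
  have agen_resource : ∀ {x m y : E}, Agen tx po rf mo m y → St tx x m →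
      Agen tx po rf mo x y := by
    rintro x m y (h | h | h) hst
    · exact Or.inl (rlift_resource h hst)
    · exact Or.inr (Or.inl (rlift_resource h hst))
    · exact Or.inr (Or.inr (rlift_resource h hst))
  have agen_pgen : ∀ {a a' b b' : E}, Agen tx po rf mo a b → St tx a' a → St tx b b' →
      Pgen tx W po rf mo a' b' := by
    intro a a' b b' h h1 h2
    rcases agen_retarget (agen_resource h h1) h2 with h' | h' | h'
    · exact Or.inl (Or.inl ⟨hconv _ _ h', rlift_not_st h'⟩)
    · exact Or.inr (Or.inl (Or.inr (Or.inr (Or.inl h'))))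
    · exact Or.inr (Or.inr (Or.inl h'))
  constructor
  · -- SI-consistent → RSI-consistent
    rintro ⟨hint, hacyc⟩
    refine ⟨hint, ?_⟩
    intro a hcyc
    -- translate each edge of the RSI cycle into Vrel-steps
    have pgen_V : ∀ a b, Pgen tx W po rf mo a b →
        Relation.TransGen (Vrel tx R W po rf mo) a b := by
      rintro a b (h | h | h | h)
      · rcases h with ⟨hpo, hnst⟩ | ⟨haW, ⟨hpo, hst⟩, hbW⟩
        · exact .single (Or.inr (Or.inl (Or.inl (rlift_cross htx hpo hnst))))
        · exact .single (Or.inl ⟨hpo, hst, hbW⟩)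
      · rcases h with ⟨_, hb⟩ | ⟨ha, _⟩ | h | h
        · exact absurd hb (htx b)
        · exact absurd ha (htx a)
        · exact .single (Or.inr (Or.inl (Or.inr (Or.inl h))))
        · obtain ⟨c, d, hac, ⟨z, hmocz, hrfzd⟩, hncd, hdb⟩ := h
          by_cases hcz : St tx c z
          · by_cases hzd : St tx z d
            · exact absurd (st_trans' hcz hzd) hncd
            · exact .single (Or.inr (Or.inl (Or.inr (Or.inl
                ⟨z, d, st_trans' hac hcz, hrfzd, hzd, hdb⟩))))
          · by_cases hzd : St tx z d
            · exact .single (Or.inr (Or.inl (Or.inr (Or.inr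
                ⟨c, z, hac, hmocz, hcz, st_trans' hzd hdb⟩))))
            · exact .head (Or.inr (Or.inl (Or.inr (Or.inr
                ⟨c, z, hac, hmocz, hcz, st_refl' htx z⟩))))
                (.single (Or.inr (Or.inl (Or.inr (Or.inl
                  ⟨z, d, st_refl' htx z, hrfzd, hzd, hdb⟩)))))
      · exact .single (Or.inr (Or.inl (Or.inr (Or.inr h))))
      · obtain ⟨htout, hBt, hbW⟩ := h
        obtain ⟨w, hrf, -⟩ := htout
        exact .single (Or.inr (Or.inr ⟨hBt, (hrfWR _ _ hrf).2, hbW⟩))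
    have srel_V : ∀ a b, ((RsiHb tx W po rf mo a b ∧ loc a = loc b) ∨ mo a b ∨ Fr rf mo a b) →
        Relation.TransGen (Vrel tx R W po rf mo) a b := by
      rintro a b (⟨hhb, -⟩ | h | h)
      · exact transGen_closure pgen_V hhb
      · by_cases hst : St tx a b
        · exact .single (Or.inl ⟨hint a b (Or.inr (Or.inl h)) hst, hst, (hmoWW _ _ h).2⟩)
        · exact .single (Or.inr (Or.inl (Or.inr (Or.inr (rlift_cross htx h hst)))))
      · by_cases hst : St tx a b
        · obtain ⟨⟨w, hrf, hmo⟩, hne⟩ := h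
          exact .single (Or.inl ⟨hint a b (Or.inr (Or.inr ⟨⟨w, hrf, hmo⟩, hne⟩)) hst, hst,
            (hmoWW _ _ hmo).2⟩)
        · obtain ⟨⟨w, hrf, hmo⟩, hne⟩ := h
          exact .single (Or.inr (Or.inr ⟨rlift_cross htx ⟨⟨w, hrf, hmo⟩, hne⟩ hst,
            (hrfWR _ _ hrf).2, (hmoWW _ _ hmo).2⟩))
    -- summarize the Vrel-cycle
    have rest_append : ∀ {x y w : E}, (GA tx po rf mo x y ∨ GB tx R W po rf mo x y) →
        Vrel tx R W po rf mo y w → (GA tx po rf mo x w ∨ GB tx R W po rf mo x w) := by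
      rintro x y w (⟨m, hp, hA⟩ | ⟨m, b, hp, hA, hCB⟩) (⟨hpo, hst, hwW⟩ | hAyw | hCByw)
      · exact Or.inl ⟨m, hp, agen_retarget hA hst⟩
      · exact Or.inl ⟨y, hp.tail ⟨y, hA, Or.inr rfl⟩, hAyw⟩
      · exact Or.inr ⟨m, y, hp, hA, hCByw⟩
      · exact Or.inr ⟨m, b, hp, hA, rlift_retarget hCB.1 hst, hCB.2.1, hwW⟩
      · exact Or.inl ⟨y, hp.tail ⟨b, hA, Or.inl hCB.1⟩, hAyw⟩
      · exact (hRWf y hCByw.2.1 hCB.2.2).elim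
    have summ_append : ∀ {x y w : E}, Summ tx R W po rf mo x y →
        Vrel tx R W po rf mo y w → Summ tx R W po rf mo x w := by
      rintro x y w (⟨hpoxy, hstxy, hyW⟩ | hrs | ⟨m, hCBxm, hrest⟩) hv
      · rcases hv with ⟨hpo, hst, hwW⟩ | hAyw | hCByw
        · exact Or.inl ⟨hpotrans hpoxy hpo, st_trans' hstxy hst, hwW⟩
        · exact Or.inr (Or.inl (Or.inl ⟨x, .refl, agen_resource hAyw hstxy⟩))
        · exact (hRWf y hCByw.2.1 hyW).elim
      · exact Or.inr (Or.inl (rest_append hrs hv))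
      · rcases hrest with heq | hrs
        · subst heq
          rcases hv with ⟨hpo, hst, hwW⟩ | hAyw | hCByw
          · exact Or.inr (Or.inr ⟨w, ⟨rlift_retarget hCBxm.1 hst, hCBxm.2.1, hwW⟩, Or.inl rfl⟩)
          · exact Or.inr (Or.inr ⟨m, hCBxm, Or.inr (Or.inl ⟨m, .refl, hAyw⟩)⟩)
          · exact (hRWf m hCByw.2.1 hCBxm.2.2).elim
        · exact Or.inr (Or.inr ⟨m, hCBxm, Or.inr (rest_append hrs hv)⟩)
    have fold : ∀ {b : E}, Relation.TransGen (Vrel tx R W po rf mo) a b →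
        Summ tx R W po rf mo a b := by
      intro b h
      induction h with
      | single h1 =>
          rcases h1 with h1 | h1 | h1
          · exact Or.inl h1
          · exact Or.inr (Or.inl (Or.inl ⟨a, .refl, h1⟩))
          · exact Or.inr (Or.inr ⟨_, h1, Or.inl rfl⟩)
      | tail _ h2 ih => exact summ_append ih h2
    have hsum : Summ tx R W po rf mo a a :=
      fold (transGen_closure srel_V hcyc)
    rcases hsum with ⟨hpoaa, -, -⟩ | (⟨m, hp, hA⟩ | ⟨m, b, hp, hA, hCB⟩) | ⟨m, hCB, hrest⟩
    · exact hpoirr a hpoaa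
    · exact hacyc a (Relation.TransGen.tail' hp ⟨a, hA, Or.inr rfl⟩)
    · exact hacyc a (Relation.TransGen.tail' hp ⟨b, hA, Or.inl hCB.1⟩)
    · rcases hrest with heq | ⟨m', hp, hA⟩ | ⟨m', b, hp, hA, hCB2⟩
      · exact hRWf a hCB.2.1 (heq ▸ hCB.2.2)
      · exact hacyc m (Relation.TransGen.tail' hp ⟨a, hA, Or.inl hCB.1⟩)
      · exact hRWf a hCB.2.1 hCB2.2.2
  · -- RSI-consistent → SI-consistent
    rintro ⟨hint, hacyc⟩
    refine ⟨hint, ?_⟩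
    intro a hcyc
    have step_case : ∀ x z, SIstep tx po rf mo x z → ∀ e, St tx e x →
        ∃ u e', (∀ e₂, St tx e₂ e → Pgen tx W po rf mo e₂ u) ∧
          Relation.ReflTransGen (Pgen tx W po rf mo) u e' ∧ St tx e' z := by
      rintro x z ⟨b, hA, hB | rfl⟩ e he
      · obtain ⟨c₀, d₀, hbc, hfr, hncd, hdz⟩ := hB
        obtain ⟨⟨w, hrf, hmo⟩, hne⟩ := hfr
        by_cases hwc : St tx w c₀
        · refine ⟨b, z, fun e₂ h₂ => agen_pgen hA (st_trans' h₂ he) (st_refl' htx b),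
            Relation.ReflTransGen.single ?_, st_refl' htx z⟩
          exact Or.inr (Or.inr (Or.inl ⟨w, d₀, st_trans' hbc (st_symm' hwc), hmo,
            fun hst => hncd (st_trans' (st_symm' hwc) hst), hdz⟩))
        · refine ⟨c₀, d₀, fun e₂ h₂ => agen_pgen hA (st_trans' h₂ he) hbc,
            Relation.ReflTransGen.single ?_, hdz⟩
          exact Or.inr (Or.inr (Or.inr ⟨⟨w, hrf, hwc⟩,
            ⟨c₀, d₀, st_refl' htx c₀, ⟨⟨w, hrf, hmo⟩, hne⟩, hncd, st_refl' htx d₀⟩,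
            (hmoWW _ _ hmo).2⟩))
      · exact ⟨b, b, fun e₂ h₂ => agen_pgen hA (st_trans' h₂ he) (st_refl' htx b),
          Relation.ReflTransGen.refl, st_refl' htx b⟩
    have key : ∀ x z, Relation.TransGen (SIstep tx po rf mo) x z → ∀ e, St tx e x →
        ∃ u e', (∀ e₂, St tx e₂ e → Pgen tx W po rf mo e₂ u) ∧
          Relation.ReflTransGen (Pgen tx W po rf mo) u e' ∧ St tx e' z := by
      intro x z h
      induction h with
      | single h1 => exact step_case _ _ h1
      | tail _ h2 ih =>
          intro e he
          obtain ⟨u, e1, hfirst, hpath, he1⟩ := ih e he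
          obtain ⟨u2, e2, hfirst2, hpath2, he2⟩ := step_case _ _ h2 e1 he1
          exact ⟨u, e2, hfirst, (hpath.tail (hfirst2 e1 (st_refl' htx e1))).trans hpath2, he2⟩
    obtain ⟨u, e', hfirst, hpath, he'⟩ := key a a hcyc a (st_refl' htx a)
    have hcycP : Relation.TransGen (Pgen tx W po rf mo) u u :=
      Relation.TransGen.tail' hpath (hfirst e' he')
    exact hacyc u (Relation.TransGen.single (Or.inl ⟨hcycP, rfl⟩))
end

section
/- (Monotonicity of RSI under wrapping code in a transaction.) Assume the two-graph setup, and: po is transitive and irreflexive; rf ⊆ W × R and loc a = loc b for every (a,b) ∈ rf; mo ⊆ W × W, loc a = loc b for every (a,b) ∈ mo, mo is transitive and irreflexive, and any two distinct writes to the same location are mo-comparable; R ∩ W = ∅; the wrapped set A is po-convex (any event po-between two events of A lies in A) and po totally orders A (any two distinct events of A are po-comparable); and transactions form po-convex blocks in both graphs, i.e. st ; (po \ st) ; st ⊆ po and st_T ; (po \ st_T) ; st_T ⊆ po. Then if G_T is RSI-consistent, so is G. -/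
variable {E : Type*} {TxId : Type*} {Loc : Type*}

/-! ### Auxiliary machinery for the proof of `stmt2` -/

/-- The one-step ("atom") relation underlying `RsiHb`. -/
def BAtom (tx : E → Option TxId) (W : Set E) (po rf mo : E → E → Prop) : E → E → Prop :=
  fun a b => RsiPo tx W po a b ∨ RsiRf tx rf mo a b ∨ RLift tx mo a b ∨ SiRb tx W rf mo a b

theorem rsiHb_eq_transGen (tx : E → Option TxId) (W : Set E) (po rf mo : E → E → Prop) :
    RsiHb tx W po rf mo = Relation.TransGen (BAtom tx W po rf mo) := rfl

/-- The cycle relation whose acyclicity is demanded by `RSIConsistent`. -/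
def CRel (tx : E → Option TxId) (W : Set E) (loc : E → Loc) (po rf mo : E → E → Prop) :
    E → E → Prop :=
  fun a b => (RsiHb tx W po rf mo a b ∧ loc a = loc b) ∨ mo a b ∨ Fr rf mo a b

/-- Machine state: an open `rsi-hb` chunk anchored at `j` reaching `p` (outside `A`). -/
def S2p (txT : E → Option TxId) (W A : Set E) (loc : E → Loc) (po rf mo : E → E → Prop)
    (ℓ : Loc) (s j p : E) : Prop :=
  (Relation.TransGen (CRel txT W loc po rf mo) s j ∨ s = j) ∧ loc j = ℓ ∧
    (RsiHb txT W po rf mo j p ∨ j = p) ∧ p ∉ A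

/-- As `S2p`, together with a strictness guarantee. -/
def PS2p (txT : E → Option TxId) (W A : Set E) (loc : E → Loc) (po rf mo : E → E → Prop)
    (ℓ : Loc) (s j p : E) : Prop :=
  S2p txT W A loc po rf mo ℓ s j p ∧
    (Relation.TransGen (CRel txT W loc po rf mo) s j ∨ RsiHb txT W po rf mo j p)

/-- Pending state inside `A`, with a retargetable entry atom from `x`. -/
def S3p (txT : E → Option TxId) (W A : Set E) (loc : E → Loc) (po rf mo : E → E → Prop)
    (ℓ : Loc) (s j x e : E) : Prop :=
  (Relation.TransGen (CRel txT W loc po rf mo) s j ∨ s = j) ∧ loc j = ℓ ∧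
    (RsiHb txT W po rf mo j x ∨ j = x) ∧ e ∈ A ∧
    ∀ v, v ∈ A → (po e v ∨ v = e) → BAtom txT W po rf mo x v

/-- Pending state inside `A`, pinned at a write `u ∈ A ∩ W`. -/
def S4p (txT : E → Option TxId) (W A : Set E) (loc : E → Loc) (po rf mo : E → E → Prop)
    (ℓ : Loc) (s u e : E) : Prop :=
  (Relation.TransGen (CRel txT W loc po rf mo) s u ∨ s = u) ∧ loc u = ℓ ∧ u ∈ A ∧ u ∈ W ∧
    e ∈ A ∧ (po u e ∨ u = e)

/-- Disjunction of the machine states. -/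
def StateP (txT : E → Option TxId) (W A : Set E) (loc : E → Loc) (po rf mo : E → E → Prop)
    (ℓ : Loc) (s e : E) : Prop :=
  (∃ j, PS2p txT W A loc po rf mo ℓ s j e) ∨
    (∃ j x, S3p txT W A loc po rf mo ℓ s j x e) ∨
    (∃ u, S4p txT W A loc po rf mo ℓ s u e)

/-- Monotonicity of RSI: wrapping a po-convex, po-totally-ordered block `A`
of non-transactional code into a fresh transaction `t0` (yielding `G_T`, with transaction
assignment `txT`) does not introduce new behaviours: if `G_T` is RSI-consistent then so is
the original execution `G` (with assignment `tx`). -/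
theorem stmt2 {E TxId Loc : Type*} (R W : Set E) (loc : E → Loc)
    (tx txT : E → Option TxId) (A : Set E) (t0 : TxId)
    (po rf mo : E → E → Prop)
    (ht0 : ∀ e, tx e ≠ some t0)
    (hA : ∀ e ∈ A, tx e = none ∧ txT e = some t0)
    (hnA : ∀ e, e ∉ A → txT e = tx e)
    (hpotrans : Transitive po) (hpoirr : Irreflexive po)
    (hrfWR : ∀ a b, rf a b → a ∈ W ∧ b ∈ R)
    (hrfloc : ∀ a b, rf a b → loc a = loc b)
    (hmoWW : ∀ a b, mo a b → a ∈ W ∧ b ∈ W)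
    (hmoloc : ∀ a b, mo a b → loc a = loc b)
    (hmotrans : Transitive mo) (hmoirr : Irreflexive mo)
    (hmototal : ∀ a b, a ∈ W → b ∈ W → loc a = loc b → a ≠ b → mo a b ∨ mo b a)
    (hRW : R ∩ W = ∅)
    (hAconv : ∀ a b c, a ∈ A → c ∈ A → po a b → po b c → b ∈ A)
    (hAtot : ∀ a ∈ A, ∀ b ∈ A, a ≠ b → po a b ∨ po b a)
    (hconv : ∀ a b, RLift tx po a b → po a b)
    (hconvT : ∀ a b, RLift txT po a b → po a b) :
    RSIConsistent txT W loc po rf mo → RSIConsistent tx W loc po rf mo := by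
  rintro ⟨hIT, hAcT⟩
  -- basic facts about the two transaction assignments
  have hTxA : ∀ {e}, e ∈ A → tx e = none := fun he => (hA _ he).1
  have hTxTA : ∀ {e}, e ∈ A → txT e = some t0 := fun he => (hA _ he).2
  have hStGT : ∀ {a b}, St tx a b → St txT a b := by
    rintro a b ⟨t, ha, hb⟩
    have haA : a ∉ A := fun h => by rw [hTxA h] at ha; cases ha
    have hbA : b ∉ A := fun h => by rw [hTxA h] at hb; cases hb
    exact ⟨t, by rw [hnA a haA]; exact ha, by rw [hnA b hbA]; exact hb⟩
  have hStA : ∀ {a b}, a ∈ A → b ∈ A → St txT a b := fun ha hb => ⟨t0, hTxTA ha, hTxTA hb⟩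
  have hStTG : ∀ {a b}, a ∉ A → St txT a b → St tx a b := by
    rintro a b haA ⟨t, ha, hb⟩
    have h1 : tx a = some t := by rw [← hnA a haA]; exact ha
    have ht : t ≠ t0 := fun h => ht0 a (h ▸ h1)
    have hbA : b ∉ A := by
      intro hbA
      rw [hTxTA hbA] at hb
      exact ht (Option.some_inj.mp hb).symm
    exact ⟨t, h1, by rw [← hnA b hbA]; exact hb⟩
  have hStTG' : ∀ {a b}, b ∉ A → St txT a b → St tx a b := by
    rintro a b hbA ⟨t, ha, hb⟩
    have h1 : tx b = some t := by rw [← hnA b hbA]; exact hb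
    have ht : t ≠ t0 := fun h => ht0 b (h ▸ h1)
    have haA : a ∉ A := by
      intro haA
      rw [hTxTA haA] at ha
      exact ht (Option.some_inj.mp ha).symm
    exact ⟨t, by rw [← hnA a haA]; exact ha, h1⟩
  have hnStT : ∀ {a b}, a ∈ A → b ∉ A → ¬ St txT a b := by
    intro a b ha hb hst
    obtain ⟨t, h1, _⟩ := hStTG' hb hst
    rw [hTxA ha] at h1; cases h1
  have hnStT' : ∀ {a b}, a ∉ A → b ∈ A → ¬ St txT a b := by
    intro a b ha hb hst
    obtain ⟨t, _, h2⟩ := hStTG ha hst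
    rw [hTxA hb] at h2; cases h2
  have hLift : ∀ {r : E → E → Prop} {a b}, RLift tx r a b → RLift txT r a b := by
    rintro r a b ⟨c, d, hac, hcd, hncd, hdb⟩
    have hcA : c ∉ A := by
      intro h
      obtain ⟨t, _, h2⟩ := hac
      rw [hTxA h] at h2; cases h2
    exact ⟨c, d, hStGT hac, hcd, fun h => hncd (hStTG hcA h), hStGT hdb⟩
  have hLiftL : ∀ {r : E → E → Prop} {a b}, RLift tx r a b → a ∉ A := by
    rintro r a b ⟨c, d, ⟨t, ha, _⟩, _⟩ h
    rw [hTxA h] at ha; cases ha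
  have hLiftR : ∀ {r : E → E → Prop} {a b}, RLift tx r a b → b ∉ A := by
    rintro r a b ⟨c, d, _, _, _, ⟨t, _, hb⟩⟩ h
    rw [hTxA h] at hb; cases hb
  have hPoInA : ∀ {a b}, a ∈ A → b ∈ A → (rf a b ∨ mo a b ∨ Fr rf mo a b) → po a b :=
    fun ha hb h => hIT _ _ h (hStA ha hb)
  have hFrW : ∀ {a b}, Fr rf mo a b → b ∈ W := by
    rintro a b ⟨⟨w, _, hm⟩, _⟩; exact (hmoWW _ _ hm).2
  have hFrloc : ∀ {a b}, Fr rf mo a b → loc a = loc b := by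
    rintro a b ⟨⟨w, hr, hm⟩, _⟩
    exact (hrfloc w a hr).symm.trans (hmoloc w b hm)
  have hRWd : ∀ {e}, e ∈ R → e ∈ W → False := fun hr hw =>
    Set.eq_empty_iff_forall_notMem.mp hRW _ ⟨hr, hw⟩
  have hCGloc : ∀ {a b}, CRel tx W loc po rf mo a b → loc a = loc b := by
    rintro a b (⟨_, h⟩ | hm | hf)
    · exact h
    · exact hmoloc _ _ hm
    · exact hFrloc hf
  have hMoFrW : ∀ {e c}, (mo e c ∨ Fr rf mo e c) → c ∈ W := by
    rintro e c (h | h)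
    · exact (hmoWW _ _ h).2
    · exact hFrW h
  -- atom transfer lemmas
  have hL1 : ∀ {c n}, BAtom tx W po rf mo c n → c ∉ A → n ∉ A → BAtom txT W po rf mo c n := by
    rintro c n (hpo | hrf' | hmoT | hsi) hc hn
    · rcases hpo with ⟨hp, hns⟩ | ⟨hw1, ⟨hp, hs⟩, hw2⟩
      · exact Or.inl (Or.inl ⟨hp, fun h => hns (hStTG hc h)⟩)
      · exact Or.inl (Or.inr ⟨hw1, ⟨hp, hStGT hs⟩, hw2⟩)
    · rcases hrf' with ⟨hr, hnt⟩ | ⟨hnt, c', hr, hs⟩ | hl | hl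
      · refine Or.inr (Or.inl (Or.inl ⟨hr, ?_⟩))
        show txT n = none
        rw [hnA n hn]; exact hnt
      · refine Or.inr (Or.inl (Or.inr (Or.inl ⟨?_, c', hr, hStGT hs⟩)))
        show txT c = none
        rw [hnA c hc]; exact hnt
      · exact Or.inr (Or.inl (Or.inr (Or.inr (Or.inl (hLift hl)))))
      · exact Or.inr (Or.inl (Or.inr (Or.inr (Or.inr (hLift hl)))))
    · exact Or.inr (Or.inr (Or.inl (hLift hmoT)))
    · obtain ⟨⟨w, hrw, hnst⟩, hl, hW⟩ := hsi
      exact Or.inr (Or.inr (Or.inr ⟨⟨w, hrw, fun h => hnst (hStTG' hc h)⟩, hLift hl, hW⟩))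
  have hL2 : ∀ {c n}, BAtom tx W po rf mo c n → c ∉ A → n ∈ A →
      ∀ v, v ∈ A → (po n v ∨ v = n) → BAtom txT W po rf mo c v := by
    rintro c n ((⟨hp, _⟩ | ⟨_, ⟨_, hs⟩, _⟩) | (⟨hr, _⟩ | ⟨_, c', _, hs⟩ | hl | hl) | hl |
        ⟨_, hl, _⟩) hc hn v hv hpv
    · refine Or.inl (Or.inl ⟨?_, hnStT' hc hv⟩)
      rcases hpv with h | rfl
      · exact hpotrans hp h
      · exact hp
    · obtain ⟨t, _, h2⟩ := hs; rw [hTxA hn] at h2; cases h2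
    · by_cases htc : tx c = none
      · refine Or.inr (Or.inl (Or.inr (Or.inl ⟨?_, n, hr, hStA hn hv⟩)))
        show txT c = none
        rw [hnA c hc]; exact htc
      · obtain ⟨t, ht⟩ := Option.ne_none_iff_exists'.mp htc
        have htt : txT c = some t := by rw [hnA c hc]; exact ht
        exact Or.inr (Or.inl (Or.inr (Or.inr (Or.inl
          ⟨c, n, ⟨t, htt, htt⟩, hr, hnStT' hc hn, hStA hn hv⟩))))
    · obtain ⟨t, _, h2⟩ := hs; rw [hTxA hn] at h2; cases h2
    · exact absurd hn (hLiftR hl)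
    · exact absurd hn (hLiftR hl)
    · exact absurd hn (hLiftR hl)
    · exact absurd hn (hLiftR hl)
  have hL3 : ∀ {c n}, BAtom tx W po rf mo c n → c ∈ A → n ∈ A → po c n := by
    rintro c n ((⟨hp, _⟩ | ⟨_, ⟨_, hs⟩, _⟩) | (⟨hr, _⟩ | ⟨_, c', _, hs⟩ | hl | hl) | hl |
        ⟨_, hl, _⟩) hc hn
    · exact hp
    · obtain ⟨t, h1, _⟩ := hs; rw [hTxA hc] at h1; cases h1
    · exact hPoInA hc hn (Or.inl hr)
    · obtain ⟨t, _, h2⟩ := hs; rw [hTxA hn] at h2; cases h2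
    · exact absurd hc (hLiftL hl)
    · exact absurd hc (hLiftL hl)
    · exact absurd hc (hLiftL hl)
    · exact absurd hc (hLiftL hl)
  have hL4 : ∀ {c n}, BAtom tx W po rf mo c n → c ∈ A → n ∉ A → BAtom txT W po rf mo c n := by
    rintro c n ((⟨hp, _⟩ | ⟨_, ⟨_, hs⟩, _⟩) | (⟨hr, hnt⟩ | ⟨hnt, c', hr, hs⟩ | hl | hl) | hl |
        ⟨_, hl, _⟩) hc hn
    · exact Or.inl (Or.inl ⟨hp, hnStT hc hn⟩)
    · obtain ⟨t, h1, _⟩ := hs; rw [hTxA hc] at h1; cases h1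
    · refine Or.inr (Or.inl (Or.inl ⟨hr, ?_⟩))
      show txT n = none
      rw [hnA n hn]; exact hnt
    · have hc'A : c' ∉ A := by
        intro h; obtain ⟨t, h1, _⟩ := hs; rw [hTxA h] at h1; cases h1
      exact Or.inr (Or.inl (Or.inr (Or.inr (Or.inl
        ⟨c, c', hStA hc hc, hr, hnStT hc hc'A, hStGT hs⟩))))
    · exact absurd hc (hLiftL hl)
    · exact absurd hc (hLiftL hl)
    · exact absurd hc (hLiftL hl)
    · exact absurd hc (hLiftL hl)
  have hL4W : ∀ {u c n}, BAtom tx W po rf mo c n → c ∈ A → n ∉ A → u ∈ A → u ∈ W →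
      (po u c ∨ u = c) →
      (BAtom txT W po rf mo u n ∨ (BAtom txT W po rf mo u c ∧ BAtom txT W po rf mo c n)) := by
    rintro u c n ((⟨hp, _⟩ | ⟨_, ⟨_, hs⟩, _⟩) | (⟨hr, hnt⟩ | ⟨hnt, c', hr, hs⟩ | hl | hl) | hl |
        ⟨_, hl, _⟩) hc hn hu huW hpuc
    · refine Or.inl (Or.inl (Or.inl ⟨?_, hnStT hu hn⟩))
      rcases hpuc with h | rfl
      · exact hpotrans h hp
      · exact hp
    · obtain ⟨t, h1, _⟩ := hs; rw [hTxA hc] at h1; cases h1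
    · have hcW : c ∈ W := (hrfWR c n hr).1
      have hbtn : BAtom txT W po rf mo c n := by
        refine Or.inr (Or.inl (Or.inl ⟨hr, ?_⟩))
        show txT n = none
        rw [hnA n hn]; exact hnt
      rcases hpuc with h | rfl
      · exact Or.inr ⟨Or.inl (Or.inr ⟨huW, ⟨h, hStA hu hc⟩, hcW⟩), hbtn⟩
      · exact Or.inl hbtn
    · have hc'A : c' ∉ A := by
        intro h; obtain ⟨t, h1, _⟩ := hs; rw [hTxA h] at h1; cases h1
      exact Or.inl (Or.inr (Or.inl (Or.inr (Or.inr (Or.inl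
        ⟨c, c', hStA hu hc, hr, hnStT hc hc'A, hStGT hs⟩)))))
    · exact absurd hc (hLiftL hl)
    · exact absurd hc (hLiftL hl)
    · exact absurd hc (hLiftL hl)
    · exact absurd hc (hLiftL hl)
  -- small helpers
  have hHTtail : ∀ {j x e}, (RsiHb txT W po rf mo j x ∨ j = x) → BAtom txT W po rf mo x e →
      RsiHb txT W po rf mo j e := by
    rintro j x e (h | rfl) ha
    · exact Relation.TransGen.tail h ha
    · exact Relation.TransGen.single ha
  have hTCof : ∀ {s e c}, (Relation.TransGen (CRel txT W loc po rf mo) s e ∨ s = e) →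
      CRel txT W loc po rf mo e c → Relation.TransGen (CRel txT W loc po rf mo) s c := by
    rintro s e c (h | rfl) hc
    · exact h.tail hc
    · exact Relation.TransGen.single hc
  have hClose : ∀ {s : E} {ℓ : Loc} {j e : E}, PS2p txT W A loc po rf mo ℓ s j e → loc e = ℓ →
      Relation.TransGen (CRel txT W loc po rf mo) s e := by
    rintro s ℓ j e ⟨⟨hsj, hlj, hjp, _⟩, hprog⟩ hle
    have edge : RsiHb txT W po rf mo j e → CRel txT W loc po rf mo j e := fun h =>
      Or.inl ⟨h, hlj.trans hle.symm⟩
    rcases hprog with hTC | hHT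
    · rcases hjp with hHT | rfl
      · exact hTC.tail (edge hHT)
      · exact hTC
    · exact hTCof hsj (edge hHT)
  -- atom-level step of the machine
  have hStepAtom0 : ∀ {s : E} {ℓ : Loc} {j c n : E}, S2p txT W A loc po rf mo ℓ s j c →
      BAtom tx W po rf mo c n → StateP txT W A loc po rf mo ℓ s n := by
    rintro s ℓ j c n ⟨hsj, hlj, hjp, hcA⟩ hat
    by_cases hnA' : n ∈ A
    · exact Or.inr (Or.inl ⟨j, c, hsj, hlj, hjp, hnA',
        fun v hv hpv => hL2 hat hcA hnA' v hv hpv⟩)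
    · have hht := hHTtail hjp (hL1 hat hcA hnA')
      exact Or.inl ⟨j, ⟨hsj, hlj, Or.inl hht, hnA'⟩, Or.inr hht⟩
  have hStepAtom : ∀ {s : E} {ℓ : Loc} {c n : E}, StateP txT W A loc po rf mo ℓ s c →
      BAtom tx W po rf mo c n → StateP txT W A loc po rf mo ℓ s n := by
    rintro s ℓ c n (⟨j, hps2⟩ | ⟨j, x, hsj, hlj, hjx, hcA, htmpl⟩ |
        ⟨u, hsu, hlu, huA, huW, hcA, hpuc⟩) hat
    · exact hStepAtom0 hps2.1 hat
    · by_cases hnA' : n ∈ A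
      · refine Or.inr (Or.inl ⟨j, x, hsj, hlj, hjx, hnA',
          fun v hv hpv => htmpl v hv (Or.inl ?_)⟩)
        have hpcn : po c n := hL3 hat hcA hnA'
        rcases hpv with h | rfl
        · exact hpotrans hpcn h
        · exact hpcn
      · have hht : RsiHb txT W po rf mo j n :=
          Relation.TransGen.tail (hHTtail hjx (htmpl c hcA (Or.inr rfl))) (hL4 hat hcA hnA')
        exact Or.inl ⟨j, ⟨hsj, hlj, Or.inl hht, hnA'⟩, Or.inr hht⟩
    · by_cases hnA' : n ∈ A
      · refine Or.inr (Or.inr ⟨u, hsu, hlu, huA, huW, hnA', Or.inl ?_⟩)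
        have hpcn : po c n := hL3 hat hcA hnA'
        rcases hpuc with h | rfl
        · exact hpotrans h hpcn
        · exact hpcn
      · have hht : RsiHb txT W po rf mo u n := by
          rcases hL4W hat hcA hnA' huA huW hpuc with hbt | ⟨hbt1, hbt2⟩
          · exact Relation.TransGen.single hbt
          · exact Relation.TransGen.tail (Relation.TransGen.single hbt1) hbt2
        exact Or.inl ⟨u, ⟨hsu, hlu, Or.inl hht, hnA'⟩, Or.inr hht⟩
  have hInner : ∀ {s : E} {ℓ : Loc} {p q : E}, Relation.TransGen (BAtom tx W po rf mo) p q →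
      StateP txT W A loc po rf mo ℓ s p → StateP txT W A loc po rf mo ℓ s q := by
    intro s ℓ p q h hst
    induction h with
    | single h' => exact hStepAtom hst h'
    | tail _ h' ih => exact hStepAtom ih h'
  have hInner0 : ∀ {s : E} {ℓ : Loc} {j p q : E}, Relation.TransGen (BAtom tx W po rf mo) p q →
      S2p txT W A loc po rf mo ℓ s j p → StateP txT W A loc po rf mo ℓ s q := by
    intro s ℓ j p q h hst
    induction h with
    | single h' => exact hStepAtom0 hst h'
    | tail _ h' ih => exact hStepAtom ih h'
  -- macro-level steps
  have hStepMacroA : ∀ {s : E} {ℓ : Loc} {e c : E}, CRel tx W loc po rf mo e c → loc e = ℓ →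
      loc c = ℓ → StateP txT W A loc po rf mo ℓ s e → StateP txT W A loc po rf mo ℓ s c := by
    intro s ℓ e c hcg hle hlc hst
    have hmfCase : (mo e c ∨ Fr rf mo e c) → StateP txT W A loc po rf mo ℓ s c := by
      intro hmf
      have hct : CRel txT W loc po rf mo e c := by
        rcases hmf with h | h
        · exact Or.inr (Or.inl h)
        · exact Or.inr (Or.inr h)
      have hcW : c ∈ W := hMoFrW hmf
      rcases hst with ⟨j, hps⟩ | ⟨j, x, hsj, hlj, hjx, heA, htmpl⟩ |
          ⟨u, hsu, hlu, huA, huW, heA, hpue⟩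
      · have hTsc : Relation.TransGen (CRel txT W loc po rf mo) s c :=
          (hClose hps hle).tail hct
        by_cases hcA : c ∈ A
        · exact Or.inr (Or.inr ⟨c, Or.inl hTsc, hlc, hcA, hcW, hcA, Or.inr rfl⟩)
        · exact Or.inl ⟨c, ⟨Or.inl hTsc, hlc, Or.inr rfl, hcA⟩, Or.inl hTsc⟩
      · by_cases hcA : c ∈ A
        · have hpec : po e c := by
            rcases hmf with h | h
            · exact hPoInA heA hcA (Or.inr (Or.inl h))
            · exact hPoInA heA hcA (Or.inr (Or.inr h))
          refine Or.inr (Or.inl ⟨j, x, hsj, hlj, hjx, hcA,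
            fun v hv hpv => htmpl v hv (Or.inl ?_)⟩)
          rcases hpv with h | rfl
          · exact hpotrans hpec h
          · exact hpec
        · have hht : RsiHb txT W po rf mo j e := hHTtail hjx (htmpl e heA (Or.inr rfl))
          have hTse : Relation.TransGen (CRel txT W loc po rf mo) s e :=
            hTCof hsj (Or.inl ⟨hht, hlj.trans hle.symm⟩)
          have hTsc := hTse.tail hct
          exact Or.inl ⟨c, ⟨Or.inl hTsc, hlc, Or.inr rfl, hcA⟩, Or.inl hTsc⟩
      · by_cases hcA : c ∈ A
        · have hpec : po e c := by
            rcases hmf with h | h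
            · exact hPoInA heA hcA (Or.inr (Or.inl h))
            · exact hPoInA heA hcA (Or.inr (Or.inr h))
          refine Or.inr (Or.inr ⟨u, hsu, hlu, huA, huW, hcA, Or.inl ?_⟩)
          rcases hpue with h | rfl
          · exact hpotrans h hpec
          · exact hpec
        · rcases hmf with hmo'' | hfr''
          · have heW : e ∈ W := (hmoWW e c hmo'').1
            have hTse : Relation.TransGen (CRel txT W loc po rf mo) s e ∨ s = e := by
              rcases hpue with hp | rfl
              · have hbt : BAtom txT W po rf mo u e :=
                  Or.inl (Or.inr ⟨huW, ⟨hp, hStA huA heA⟩, heW⟩)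
                exact Or.inl (hTCof hsu (Or.inl ⟨Relation.TransGen.single hbt,
                  hlu.trans hle.symm⟩))
              · exact hsu
            have hTsc := hTCof hTse (Or.inr (Or.inl hmo''))
            exact Or.inl ⟨c, ⟨Or.inl hTsc, hlc, Or.inr rfl, hcA⟩, Or.inl hTsc⟩
          · obtain ⟨⟨w, hrw, hmw⟩, hnec⟩ := hfr''
            have heR : e ∈ R := (hrfWR w e hrw).2
            have hwW : w ∈ W := (hrfWR w e hrw).1
            have hune : u ≠ e := fun h => hRWd heR (h ▸ huW)
            have hpue' : po u e := by
              rcases hpue with h | h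
              · exact h
              · exact absurd h hune
            have hluw : loc u = loc w := hlu.trans (hle.symm.trans (hrfloc w e hrw).symm)
            have hmouc : mo u c := by
              by_cases huw : u = w
              · rw [huw]; exact hmw
              · rcases hmototal u w huW hwW hluw huw with h | h
                · exact hmotrans h hmw
                · exfalso
                  have hfr2 : Fr rf mo e u := ⟨⟨w, hrw, h⟩, fun hh => hune hh.symm⟩
                  exact hpoirr u (hpotrans hpue' (hPoInA heA huA (Or.inr (Or.inr hfr2))))
            have hTsc := hTCof hsu (Or.inr (Or.inl hmouc))
            exact Or.inl ⟨c, ⟨Or.inl hTsc, hlc, Or.inr rfl, hcA⟩, Or.inl hTsc⟩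
    rcases hcg with ⟨hhb, _⟩ | hmo' | hfr'
    · exact hInner hhb hst
    · exact hmfCase (Or.inl hmo')
    · exact hmfCase (Or.inr hfr')
  have hStep0Macro : ∀ {s : E} {ℓ : Loc} {j e c : E}, CRel tx W loc po rf mo e c → loc e = ℓ →
      loc c = ℓ → S2p txT W A loc po rf mo ℓ s j e → StateP txT W A loc po rf mo ℓ s c := by
    intro s ℓ j e c hcg hle hlc hs2
    have hmfCase : (mo e c ∨ Fr rf mo e c) → StateP txT W A loc po rf mo ℓ s c := by
      intro hmf
      obtain ⟨hsj, hlj, hjp, heA'⟩ := hs2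
      have hct : CRel txT W loc po rf mo e c := by
        rcases hmf with h | h
        · exact Or.inr (Or.inl h)
        · exact Or.inr (Or.inr h)
      have hTse : Relation.TransGen (CRel txT W loc po rf mo) s e ∨ s = e := by
        rcases hjp with hht | rfl
        · exact Or.inl (hTCof hsj (Or.inl ⟨hht, hlj.trans hle.symm⟩))
        · exact hsj
      have hTsc := hTCof hTse hct
      by_cases hcA : c ∈ A
      · exact Or.inr (Or.inr ⟨c, Or.inl hTsc, hlc, hcA, hMoFrW hmf, hcA, Or.inr rfl⟩)
      · exact Or.inl ⟨c, ⟨Or.inl hTsc, hlc, Or.inr rfl, hcA⟩, Or.inl hTsc⟩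
    rcases hcg with ⟨hhb, _⟩ | hmo' | hfr'
    · exact hInner0 hhb hs2
    · exact hmfCase (Or.inl hmo')
    · exact hmfCase (Or.inr hfr')
  have hStepMacroB : ∀ {s : E} {ℓ : Loc} {e c : E}, CRel tx W loc po rf mo e c → e ∈ A → c ∈ A →
      StateP txT W A loc po rf mo ℓ s e → StateP txT W A loc po rf mo ℓ s c := by
    intro s ℓ e c hcg heA hcA hst
    have hmfCase : (mo e c ∨ Fr rf mo e c) → StateP txT W A loc po rf mo ℓ s c := by
      intro hmf
      have hpec : po e c := by
        rcases hmf with h | h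
        · exact hPoInA heA hcA (Or.inr (Or.inl h))
        · exact hPoInA heA hcA (Or.inr (Or.inr h))
      rcases hst with ⟨j, ⟨_, _, _, heA'⟩, _⟩ | ⟨j, x, hsj, hlj, hjx, _, htmpl⟩ |
          ⟨u, hsu, hlu, huA, huW, _, hpue⟩
      · exact absurd heA heA'
      · refine Or.inr (Or.inl ⟨j, x, hsj, hlj, hjx, hcA,
          fun v hv hpv => htmpl v hv (Or.inl ?_)⟩)
        rcases hpv with h | rfl
        · exact hpotrans hpec h
        · exact hpec
      · refine Or.inr (Or.inr ⟨u, hsu, hlu, huA, huW, hcA, Or.inl ?_⟩)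
        rcases hpue with h | rfl
        · exact hpotrans h hpec
        · exact hpec
    rcases hcg with ⟨hhb, _⟩ | hmo' | hfr'
    · exact hInner hhb hst
    · exact hmfCase (Or.inl hmo')
    · exact hmfCase (Or.inr hfr')
  -- the case of a cycle through a point outside A
  have hCaseA : ∀ s, s ∉ A → Relation.TransGen (CRel tx W loc po rf mo) s s → False := by
    intro s hsA hc
    have hfin : StateP txT W A loc po rf mo (loc s) s s → False := by
      rintro (⟨j, hps⟩ | ⟨j, x, _, _, _, hsA', _⟩ | ⟨u, _, _, _, _, hsA', _⟩)
      · exact hAcT s (hClose hps rfl)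
      · exact hsA hsA'
      · exact hsA hsA'
    have hinit : S2p txT W A loc po rf mo (loc s) s s s := ⟨Or.inr rfl, rfl, Or.inr rfl, hsA⟩
    obtain ⟨e₁, h1, hrest⟩ := Relation.TransGen.head'_iff.mp hc
    have houter : ∀ e, Relation.ReflTransGen (CRel tx W loc po rf mo) e s → loc e = loc s →
        StateP txT W A loc po rf mo (loc s) s e → False := by
      intro e h
      induction h using Relation.ReflTransGen.head_induction_on with
      | refl => exact fun _ hst => hfin hst
      | head h' hrem ih =>
        intro hle hst
        exact ih ((hCGloc h').symm.trans hle) (hStepMacroA h' hle ((hCGloc h').symm.trans hle) hst)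
    have hle₁ : loc e₁ = loc s := (hCGloc h1).symm
    exact houter e₁ hrest hle₁ (hStep0Macro h1 rfl hle₁ hinit)
  -- main argument
  constructor
  · exact fun a b h hst => hIT a b h (hStGT hst)
  · intro a hcyc0
    have hcyc : Relation.TransGen (CRel tx W loc po rf mo) a a := hcyc0
    by_cases haA : a ∈ A
    · by_cases hjex : ∃ m, Relation.TransGen (CRel tx W loc po rf mo) a m ∧
          Relation.ReflTransGen (CRel tx W loc po rf mo) m a ∧ m ∉ A
      · obtain ⟨m, h1, h2, h3⟩ := hjex
        exact hCaseA m h3 (Relation.TransGen.trans_right h2 h1)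
      · have hj : ∀ m, Relation.TransGen (CRel tx W loc po rf mo) a m →
            Relation.ReflTransGen (CRel tx W loc po rf mo) m a → m ∈ A := by
          intro m h1 h2
          by_contra hm
          exact hjex ⟨m, h1, h2, hm⟩
        by_cases hxex : ∃ j₁ j₂ xm, Relation.ReflTransGen (CRel tx W loc po rf mo) a j₁ ∧
            Relation.TransGen (BAtom tx W po rf mo) j₁ xm ∧
            Relation.TransGen (BAtom tx W po rf mo) xm j₂ ∧ loc j₁ = loc j₂ ∧
            Relation.ReflTransGen (CRel tx W loc po rf mo) j₂ a ∧ xm ∉ A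
        · -- case (b): a mid-chunk node escapes A, while all junctions are in A
          obtain ⟨j₁, j₂, x, haj₁, hj₁x, hxj₂, hlocj, hj₂a, hxA⟩ := hxex
          have hCGj : CRel tx W loc po rf mo j₁ j₂ := Or.inl ⟨hj₁x.trans hxj₂, hlocj⟩
          have hrtgj₁a : Relation.ReflTransGen (CRel tx W loc po rf mo) j₁ a :=
            Relation.ReflTransGen.head hCGj hj₂a
          have hinit : S2p txT W A loc po rf mo (loc x) x x x :=
            ⟨Or.inr rfl, rfl, Or.inr rfl, hxA⟩
          have hst₂ : StateP txT W A loc po rf mo (loc x) x j₂ := hInner0 hxj₂ hinit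
          have hstA : StateP txT W A loc po rf mo (loc x) x a := by
            have hout1 : ∀ e, Relation.ReflTransGen (CRel tx W loc po rf mo) e a →
                Relation.TransGen (CRel tx W loc po rf mo) a e →
                StateP txT W A loc po rf mo (loc x) x e →
                StateP txT W A loc po rf mo (loc x) x a := by
              intro e h
              induction h using Relation.ReflTransGen.head_induction_on with
              | refl => exact fun _ hst => hst
              | head h' hrem ih =>
                intro hae hst
                have heA := hj _ hae (Relation.ReflTransGen.head h' hrem)
                have hcA := hj _ (hae.tail h') hrem
                exact ih (hae.tail h') (hStepMacroB h' heA hcA hst)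
            exact hout1 j₂ hj₂a (Relation.TransGen.tail' haj₁ hCGj) hst₂
          have hstJ : StateP txT W A loc po rf mo (loc x) x j₁ := by
            have hout2 : ∀ e, Relation.ReflTransGen (CRel tx W loc po rf mo) e j₁ →
                Relation.TransGen (CRel tx W loc po rf mo) a e →
                StateP txT W A loc po rf mo (loc x) x e →
                StateP txT W A loc po rf mo (loc x) x j₁ := by
              intro e h
              induction h using Relation.ReflTransGen.head_induction_on with
              | refl => exact fun _ hst => hst
              | head h' hrem ih =>
                intro hae hst
                have heA := hj _ hae ((Relation.ReflTransGen.head h' hrem).trans hrtgj₁a)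
                have hcA := hj _ (hae.tail h') (hrem.trans hrtgj₁a)
                exact ih (hae.tail h') (hStepMacroB h' heA hcA hst)
            exact hout2 a haj₁ hcyc hstA
          have hstX : StateP txT W A loc po rf mo (loc x) x x := hInner hj₁x hstJ
          rcases hstX with ⟨j, hps⟩ | ⟨_, _, _, _, _, hxA', _⟩ | ⟨_, _, _, _, _, hxA', _⟩
          · exact hAcT x (hClose hps rfl)
          · exact hxA hxA'
          · exact hxA hxA'
        · -- case (c): everything lies inside A; the cycle collapses to a po-cycle
          have hInAll : ∀ p q, Relation.TransGen (BAtom tx W po rf mo) p q → p ∈ A → q ∈ A →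
              po p q ∨ ∃ m, m ∉ A ∧ Relation.TransGen (BAtom tx W po rf mo) p m ∧
                Relation.TransGen (BAtom tx W po rf mo) m q := by
            intro p q h
            induction h with
            | single h' => exact fun hp hq => Or.inl (hL3 h' hp hq)
            | @tail b q hpb h' ih =>
              intro hp hq
              by_cases hbA : b ∈ A
              · rcases ih hp hbA with hpo | ⟨m, hm, hh1, hh2⟩
                · exact Or.inl (hpotrans hpo (hL3 h' hbA hq))
                · exact Or.inr ⟨m, hm, hh1, hh2.tail h'⟩
              · exact Or.inr ⟨b, hbA, hpb, Relation.TransGen.single h'⟩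
          have hPoStep : ∀ e c, CRel tx W loc po rf mo e c → e ∈ A → c ∈ A →
              Relation.ReflTransGen (CRel tx W loc po rf mo) a e →
              Relation.ReflTransGen (CRel tx W loc po rf mo) c a → po e c := by
            intro e c hcg heA hcA hh1 hh2
            rcases hcg with ⟨hhb, hloc'⟩ | hmo' | hfr'
            · rcases hInAll e c hhb heA hcA with hpo | ⟨m, hm, hx1, hx2⟩
              · exact hpo
              · exact absurd ⟨e, c, m, hh1, hx1, hx2, hloc', hh2, hm⟩ hxex
            · exact hPoInA heA hcA (Or.inr (Or.inl hmo'))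
            · exact hPoInA heA hcA (Or.inr (Or.inr hfr'))
          have hwalk : ∀ e, Relation.ReflTransGen (CRel tx W loc po rf mo) e a →
              Relation.TransGen (CRel tx W loc po rf mo) a e → e ∈ A → po a e → False := by
            intro e h
            induction h using Relation.ReflTransGen.head_induction_on with
            | refl => exact fun _ _ hpaa => hpoirr a hpaa
            | head h' hrem ih =>
              intro hae heA hpae
              have hcA := hj _ (hae.tail h') hrem
              have hpec := hPoStep _ _ h' heA hcA hae.to_reflTransGen hrem
              exact ih (hae.tail h') hcA (hpotrans hpae hpec)
          obtain ⟨e₁, h1, hrest⟩ := Relation.TransGen.head'_iff.mp hcyc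
          have he₁A := hj e₁ (Relation.TransGen.single h1) hrest
          have hpae₁ := hPoStep a e₁ h1 haA he₁A Relation.ReflTransGen.refl hrest
          exact hwalk e₁ hrest (Relation.TransGen.single h1) he₁A hpae₁
    · exact hCaseA a haA hcyc
end

section
/- Assume the two-graph setup, rf ⊆ W × R, mo ⊆ W × W, R ∩ W = ∅, po transitive and irreflexive, and that G_T satisfies INT (i.e. (rf ∪ mo ∪ fr) ∩ st_T ⊆ po). Then [W] ; rsi-hb ⊆ po_{i,T} ∪ rsi-hb_T, where rsi-hb is the RSI happens-before relation of G (computed with st), po_{i,T} := po ∩ st_T, and rsi-hb_T is the RSI happens-before relation of G_T (computed with st_T). In words: in G, RSI happens-before edges starting at a write are contained in the union of G_T's internal program order and G_T's RSI happens-before relation. -/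
variable {E : Type*} {TxId : Type*} {Loc : Type*}

/-- in the two-graph setup (wrapping a set `A` of non-transactional events of
`G` into a fresh transaction `t0` to obtain `G_T`), assuming `G_T` satisfies INT, every
`rsi-hb` edge of `G` starting at a write is contained in `po ∩ st_T` or in the `rsi-hb`
relation of `G_T`: `[W] ; rsi-hb ⊆ po_{i,T} ∪ rsi-hb_T`. -/
theorem stmt4 {E TxId Loc : Type*} (R W : Set E) (loc : E → Loc)
    (tx txT : E → Option TxId) (A : Set E) (t0 : TxId)
    (po rf mo : E → E → Prop)
    (ht0 : ∀ e, tx e ≠ some t0)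
    (hA : ∀ e ∈ A, tx e = none ∧ txT e = some t0)
    (hnA : ∀ e, e ∉ A → txT e = tx e)
    (hrfWR : ∀ a b, rf a b → a ∈ W ∧ b ∈ R)
    (hmoWW : ∀ a b, mo a b → a ∈ W ∧ b ∈ W)
    (hRW : R ∩ W = ∅)
    (hpotrans : Transitive po) (hpoirr : Irreflexive po)
    (hINT : ∀ a b, (rf a b ∨ mo a b ∨ Fr rf mo a b) → St txT a b → po a b) :
    ∀ a b, a ∈ W → RsiHb tx W po rf mo a b →
      (po a b ∧ St txT a b) ∨ RsiHb txT W po rf mo a b := by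

  -- basic facts about transactions
  have stT_symm : ∀ {x y : E}, St txT x y → St txT y x := by
    rintro x y ⟨t, h1, h2⟩; exact ⟨t, h2, h1⟩
  have stT_trans : ∀ {x y z : E}, St txT x y → St txT y z → St txT x z := by
    rintro x y z ⟨t, h1, h2⟩ ⟨t', h3, h4⟩
    have : t = t' := by
      have := h2.symm.trans h3
      injection this
    exact ⟨t, h1, this ▸ h4⟩
  have hAsome : ∀ {x : E}, x ∈ A → txT x = some t0 := fun hx => (hA _ hx).2
  have hAnone : ∀ {x : E}, x ∈ A → tx x = none := fun hx => (hA _ hx).1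
  have hnotA : ∀ {x : E} {t : TxId}, tx x = some t → x ∉ A := by
    intro x t h hx
    rw [hAnone hx] at h
    simp at h
  have hStT_of_St : ∀ {x y : E}, St tx x y → St txT x y ∧ x ∉ A ∧ y ∉ A := by
    rintro x y ⟨t, h1, h2⟩
    have hx : x ∉ A := hnotA h1
    have hy : y ∉ A := hnotA h2
    exact ⟨⟨t, (hnA x hx).trans h1, (hnA y hy).trans h2⟩, hx, hy⟩
  have hSt_of_StT : ∀ {x y : E}, x ∉ A → y ∉ A → St txT x y → St tx x y := by
    rintro x y hx hy ⟨t, h1, h2⟩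
    exact ⟨t, (hnA x hx).symm.trans h1, (hnA y hy).symm.trans h2⟩
  have hA_of_StT : ∀ {x y : E}, St txT x y → x ∈ A → y ∈ A := by
    rintro x y ⟨t, h1, h2⟩ hx
    by_contra hy
    have h3 : txT x = some t0 := hAsome hx
    have ht : t = t0 := by
      have := h1.symm.trans h3
      injection this
    exact ht0 y ((hnA y hy).symm.trans (h2.trans (by rw [ht])))
  have hStT_A : ∀ {x y : E}, x ∈ A → y ∈ A → St txT x y :=
    fun hx hy => ⟨t0, hAsome hx, hAsome hy⟩
  have hLift : ∀ (r : E → E → Prop) {x y : E},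
      RLift tx r x y → RLift txT r x y ∧ x ∉ A ∧ y ∉ A := by
    rintro r x y ⟨c, d, hxc, hr, hnst, hdy⟩
    obtain ⟨hxcT, hxA, hcA⟩ := hStT_of_St hxc
    obtain ⟨hdyT, hdA, hyA⟩ := hStT_of_St hdy
    exact ⟨⟨c, d, hxcT, hr, fun h => hnst (hSt_of_StT hcA hdA h), hdyT⟩, hxA, hyA⟩
  -- core single-edge translation
  have core : ∀ x d,
      (RsiPo tx W po x d ∨ RsiRf tx rf mo x d ∨ RLift tx mo x d ∨ SiRb tx W rf mo x d) →
      ((RsiPo txT W po x d ∨ RsiRf txT rf mo x d ∨ RLift txT mo x d ∨ SiRb txT W rf mo x d)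
        ∧ (d ∈ A → ∀ e, po d e → St txT d e →
            (RsiPo txT W po x e ∨ RsiRf txT rf mo x e ∨ RLift txT mo x e ∨ SiRb txT W rf mo x e))
        ∧ (x ∈ A → x ∈ W ∨ (po x d ∧ ¬ St txT x d)))
      ∨ (po x d ∧ St txT x d ∧ x ∈ A ∧ d ∈ A) := by
    intro x d hxd
    rcases hxd with hpo' | hrf' | hmo' | hsirb
    · -- rsi-po of G
      rcases hpo' with ⟨hpo, hnst⟩ | ⟨hxW, ⟨hpo, hst⟩, hdW⟩
      · by_cases hstT : St txT x d
        · by_cases hxA : x ∈ A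
          · exact Or.inr ⟨hpo, hstT, hxA, hA_of_StT hstT hxA⟩
          · exfalso
            have hdA : d ∉ A := fun hd => hxA (hA_of_StT (stT_symm hstT) hd)
            exact hnst (hSt_of_StT hxA hdA hstT)
        · refine Or.inl ⟨Or.inl (Or.inl ⟨hpo, hstT⟩), ?_, fun _ => Or.inr ⟨hpo, hstT⟩⟩
          intro hdA e hpe hste
          exact Or.inl (Or.inl ⟨hpotrans hpo hpe,
            fun h => hstT (stT_trans h (stT_symm hste))⟩)
      · obtain ⟨hstT, hxnA, hdnA⟩ := hStT_of_St hst
        exact Or.inl ⟨Or.inl (Or.inr ⟨hxW, ⟨hpo, hstT⟩, hdW⟩),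
          fun hdA => absurd hdA hdnA, fun hxA => absurd hxA hxnA⟩
    · -- rsi-rf of G
      rcases hrf' with ⟨hrf, hdNT⟩ | ⟨hxNT, c', hrf, hstc'd⟩ | hrfT | hmorfT
      · have hxW : x ∈ W := (hrfWR _ _ hrf).1
        have hdnone : tx d = none := hdNT
        by_cases hdA : d ∈ A
        · by_cases hxA : x ∈ A
          · have hstT : St txT x d := hStT_A hxA hdA
            exact Or.inr ⟨hINT x d (Or.inl hrf) hstT, hstT, hxA, hdA⟩
          · have htxTx : txT x = tx x := hnA x hxA
            have hnstxd : ¬ St txT x d := by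
              rintro ⟨t, h1, h2⟩
              have : t = t0 := by
                have := h2.symm.trans (hAsome hdA)
                injection this
              exact ht0 x (htxTx.symm.trans (h1.trans (by rw [this])))
            have hstdd : St txT d d := ⟨t0, hAsome hdA, hAsome hdA⟩
            cases htx : tx x with
            | none =>
              have hxNT' : x ∈ NTset txT := htxTx.trans htx
              refine Or.inl ⟨Or.inr (Or.inl (Or.inr (Or.inl ⟨hxNT', d, hrf, hstdd⟩))),
                ?_, fun hxA' => absurd hxA' hxA⟩
              intro _ e hpe hste
              exact Or.inr (Or.inl (Or.inr (Or.inl ⟨hxNT', d, hrf, hste⟩)))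
            | some t =>
              have hstxx : St txT x x := ⟨t, htxTx.trans htx, htxTx.trans htx⟩
              refine Or.inl ⟨Or.inr (Or.inl (Or.inr (Or.inr (Or.inl
                ⟨x, d, hstxx, hrf, hnstxd, hstdd⟩)))), ?_, fun hxA' => absurd hxA' hxA⟩
              intro _ e hpe hste
              exact Or.inr (Or.inl (Or.inr (Or.inr (Or.inl ⟨x, d, hstxx, hrf, hnstxd, hste⟩))))
        · have hdNT' : d ∈ NTset txT := (hnA d hdA).trans hdnone
          exact Or.inl ⟨Or.inr (Or.inl (Or.inl ⟨hrf, hdNT'⟩)),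
            fun hdA' => absurd hdA' hdA, fun _ => Or.inl hxW⟩
      · -- [NT] ; rf ; st
        have hxW : x ∈ W := (hrfWR _ _ hrf).1
        obtain ⟨hstT, hc'nA, hdnA⟩ := hStT_of_St hstc'd
        have hxnone : tx x = none := hxNT
        by_cases hxA : x ∈ A
        · have hstxx : St txT x x := ⟨t0, hAsome hxA, hAsome hxA⟩
          have hnxc' : ¬ St txT x c' := by
            rintro ⟨t, h1, h2⟩
            have : t = t0 := by
              have := h1.symm.trans (hAsome hxA)
              injection this
            obtain ⟨u, hu1, hu2⟩ := hstc'd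
            exact ht0 c' (((hnA c' hc'nA).symm.trans (h2.trans (by rw [this]))))
          exact Or.inl ⟨Or.inr (Or.inl (Or.inr (Or.inr (Or.inl
            ⟨x, c', hstxx, hrf, hnxc', hstT⟩)))),
            fun hdA => absurd hdA hdnA, fun _ => Or.inl hxW⟩
        · have hxNT' : x ∈ NTset txT := (hnA x hxA).trans hxnone
          exact Or.inl ⟨Or.inr (Or.inl (Or.inr (Or.inl ⟨hxNT', c', hrf, hstT⟩))),
            fun hdA => absurd hdA hdnA, fun _ => Or.inl hxW⟩
      · obtain ⟨hT, hxnA, hdnA⟩ := hLift _ hrfT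
        exact Or.inl ⟨Or.inr (Or.inl (Or.inr (Or.inr (Or.inl hT)))),
          fun hdA => absurd hdA hdnA, fun hxA => absurd hxA hxnA⟩
      · obtain ⟨hT, hxnA, hdnA⟩ := hLift _ hmorfT
        exact Or.inl ⟨Or.inr (Or.inl (Or.inr (Or.inr (Or.inr hT)))),
          fun hdA => absurd hdA hdnA, fun hxA => absurd hxA hxnA⟩
    · -- mo_T
      obtain ⟨hT, hxnA, hdnA⟩ := hLift _ hmo'
      exact Or.inl ⟨Or.inr (Or.inr (Or.inl hT)),
        fun hdA => absurd hdA hdnA, fun hxA => absurd hxA hxnA⟩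
    · -- si-rb
      obtain ⟨htout, hfr, hdW⟩ := hsirb
      obtain ⟨hfrT, hxnA, hdnA⟩ := hLift _ hfr
      obtain ⟨w, hrfwx, hnst⟩ := htout
      have hnstT : ¬ St txT w x := by
        intro h
        by_cases hwA : w ∈ A
        · exact hxnA (hA_of_StT h hwA)
        · exact hnst (hSt_of_StT hwA hxnA h)
      exact Or.inl ⟨Or.inr (Or.inr (Or.inr ⟨⟨w, hrfwx, hnstT⟩, hfrT, hdW⟩)),
        fun hdA => absurd hdA hdnA, fun hxA => absurd hxA hxnA⟩
  -- main argument
  intro a b haW hab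
  have key : (po a b ∧ St txT a b ∧ b ∈ A) ∨
      (RsiHb txT W po rf mo a b ∧
        (b ∈ A → ∀ e, po b e → St txT b e → RsiHb txT W po rf mo a e)) := by
    induction hab with
    | single h =>
      rcases core _ _ h with ⟨hg, hsafe, _⟩ | ⟨hpo, hst, _, hbA⟩
      · exact Or.inr ⟨Relation.TransGen.single hg,
          fun hbA e hpe hste => Relation.TransGen.single (hsafe hbA e hpe hste)⟩
      · exact Or.inl ⟨hpo, hst, hbA⟩
    | tail h₁ h₂ ih =>
      rename_i c b'
      rcases core _ _ h₂ with ⟨hg, hsafe, hpend⟩ | ⟨hpo, hst, hcA, hbA⟩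
      · rcases ih with ⟨hpoac, hstac, hcA⟩ | ⟨hhb, hsafeC⟩
        · by_cases hcW : c ∈ W
          · have e1 : RsiPo txT W po a c ∨ RsiRf txT rf mo a c ∨
                RLift txT mo a c ∨ SiRb txT W rf mo a c :=
              Or.inl (Or.inr ⟨haW, ⟨hpoac, hstac⟩, hcW⟩)
            have hac : RsiHb txT W po rf mo a c := Relation.TransGen.single e1
            refine Or.inr ⟨hac.tail hg, fun hbA e hpe hste => hac.tail (hsafe hbA e hpe hste)⟩
          · rcases hpend hcA with hcW' | ⟨hpcb, hnst⟩
            · exact absurd hcW' hcW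
            · have hgen : RsiPo txT W po a b' ∨ RsiRf txT rf mo a b' ∨
                  RLift txT mo a b' ∨ SiRb txT W rf mo a b' :=
                Or.inl (Or.inl ⟨hpotrans hpoac hpcb,
                  fun h => hnst (stT_trans (stT_symm hstac) h)⟩)
              exact Or.inr ⟨Relation.TransGen.single hgen,
                fun hbA => absurd (hStT_A hcA hbA) hnst⟩
        · exact Or.inr ⟨hhb.tail hg, fun hbA e hpe hste => hhb.tail (hsafe hbA e hpe hste)⟩
      · rcases ih with ⟨hpoac, hstac, _⟩ | ⟨hhb, hsafeC⟩
        · exact Or.inl ⟨hpotrans hpoac hpo, stT_trans hstac hst, hbA⟩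
        · refine Or.inr ⟨hsafeC hcA b' hpo hst, fun hbA' e hpe hste => ?_⟩
          exact hsafeC hcA e (hpotrans hpo hpe) (stT_trans hst hste)
  rcases key with ⟨h1, h2, _⟩ | ⟨h, _⟩
  · exact Or.inl ⟨h1, h2⟩
  · exact Or.inr h
end

section
/- Let A := [W] ; po_i ; [W]. Assume toutR ∩ W = ∅ (no externally-reading read is a write). Then A ; si-hb ⊆ si-hb and si-hb ; A ⊆ si-hb. -/
variable {E : Type*} {TxId : Type*} {Loc : Type*}

lemma st_trans'_s5 {E TxId : Type*} {tx : E → Option TxId} {a b c : E}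
    (h1 : St tx a b) (h2 : St tx b c) : St tx a c := by
  obtain ⟨t, ha, hb⟩ := h1
  obtain ⟨s, hb', hc⟩ := h2
  have : t = s := by have := hb.symm.trans hb'; injection this
  exact ⟨t, ha, this ▸ hc⟩

lemma stepL' {E TxId : Type*} {W : Set E} {tx : E → Option TxId}
    {po rf mo : E → E → Prop} {a c b : E}
    (hac : St tx a c) (hc : c ∉ ToutR tx rf)
    (h : RLift tx po c b ∨ RLift tx rf c b ∨ RLift tx mo c b ∨ SiRb tx W rf mo c b) :
    RLift tx po a b ∨ RLift tx rf a b ∨ RLift tx mo a b ∨ SiRb tx W rf mo a b := by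
  rcases h with ⟨x, y, h1, h2, h3, h4⟩ | ⟨x, y, h1, h2, h3, h4⟩ | ⟨x, y, h1, h2, h3, h4⟩ | ⟨ht, _, _⟩
  · exact Or.inl ⟨x, y, st_trans'_s5 hac h1, h2, h3, h4⟩
  · exact Or.inr (Or.inl ⟨x, y, st_trans'_s5 hac h1, h2, h3, h4⟩)
  · exact Or.inr (Or.inr (Or.inl ⟨x, y, st_trans'_s5 hac h1, h2, h3, h4⟩))
  · exact absurd ht hc

lemma stepR' {E TxId : Type*} {W : Set E} {tx : E → Option TxId}
    {po rf mo : E → E → Prop} {x c b : E}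
    (hcb : St tx c b) (hbW : b ∈ W)
    (h : RLift tx po x c ∨ RLift tx rf x c ∨ RLift tx mo x c ∨ SiRb tx W rf mo x c) :
    RLift tx po x b ∨ RLift tx rf x b ∨ RLift tx mo x b ∨ SiRb tx W rf mo x b := by
  rcases h with ⟨p, q, h1, h2, h3, h4⟩ | ⟨p, q, h1, h2, h3, h4⟩ | ⟨p, q, h1, h2, h3, h4⟩ |
    ⟨ht, ⟨p, q, h1, h2, h3, h4⟩, _⟩
  · exact Or.inl ⟨p, q, h1, h2, h3, st_trans'_s5 h4 hcb⟩
  · exact Or.inr (Or.inl ⟨p, q, h1, h2, h3, st_trans'_s5 h4 hcb⟩)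
  · exact Or.inr (Or.inr (Or.inl ⟨p, q, h1, h2, h3, st_trans'_s5 h4 hcb⟩))
  · exact Or.inr (Or.inr (Or.inr ⟨ht, ⟨p, q, h1, h2, h3, st_trans'_s5 h4 hcb⟩, hbW⟩))

/-- with `A := [W] ; po_i ; [W]`, if no externally-reading read is a write
then `A ; si-hb ⊆ si-hb` and `si-hb ; A ⊆ si-hb`. -/
theorem stmt5 {E TxId : Type*} (W : Set E) (tx : E → Option TxId)
    (po rf mo : E → E → Prop)
    (htout : ToutR tx rf ∩ W = ∅) :
    (∀ a b, (∃ c, (a ∈ W ∧ (po a c ∧ St tx a c) ∧ c ∈ W) ∧ SiHb tx W po rf mo c b) →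
        SiHb tx W po rf mo a b) ∧
    (∀ a b, (∃ c, SiHb tx W po rf mo a c ∧ (c ∈ W ∧ (po c b ∧ St tx c b) ∧ b ∈ W)) →
        SiHb tx W po rf mo a b) := by
  constructor
  · rintro a b ⟨c, ⟨haW, ⟨hpo, hst⟩, hcW⟩, hhb⟩
    have hcnot : c ∉ ToutR tx rf := fun h =>
      Set.eq_empty_iff_forall_notMem.mp htout c ⟨h, hcW⟩
    obtain ⟨d, h1, h2⟩ := Relation.TransGen.head'_iff.mp hhb
    exact Relation.TransGen.head' (stepL' hst hcnot h1) h2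
  · rintro a b ⟨c, hhb, ⟨hcW, ⟨hpo, hst⟩, hbW⟩⟩
    cases hhb with
    | single h => exact Relation.TransGen.single (stepR' hst hbW h)
    | tail h1 h2 => exact Relation.TransGen.tail h1 (stepR' hst hbW h2)
end

section
/- Let A := [W] ; po_i ; [W] and B := fr ∩ po_i. Assume: po is transitive and irreflexive; rf ⊆ W × R; mo is transitive; any two distinct writes to the same location are mo-comparable; mo ∩ st ⊆ po; and R ∩ W = ∅. Then B ; (A|loc) ⊆ B, i.e. composing fr ∩ po_i with a same-location internal write-to-write program-order edge stays inside fr ∩ po_i. -/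
variable {E : Type*} {TxId : Type*} {Loc : Type*}

/-- with `A := [W] ; po_i ; [W]` and `B := fr ∩ po_i`, under the listed
assumptions, `B ; (A|loc) ⊆ B`. -/
theorem stmt6 {E TxId Loc : Type*} (R W : Set E) (loc : E → Loc)
    (tx : E → Option TxId) (po rf mo : E → E → Prop)
    (hpotrans : Transitive po) (hpoirr : Irreflexive po)
    (hrfWR : ∀ a b, rf a b → a ∈ W ∧ b ∈ R)
    (hmotrans : Transitive mo)
    (hmototal : ∀ a b, a ∈ W → b ∈ W → loc a = loc b → a ≠ b → mo a b ∨ mo b a)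
    (hmoint : ∀ a b, mo a b → St tx a b → po a b)
    (hRW : R ∩ W = ∅) :
    ∀ a c, (∃ b, (Fr rf mo a b ∧ (po a b ∧ St tx a b)) ∧
        ((b ∈ W ∧ (po b c ∧ St tx b c) ∧ c ∈ W) ∧ loc b = loc c)) →
      Fr rf mo a c ∧ (po a c ∧ St tx a c) := by
  rintro a c ⟨b, ⟨⟨⟨w, hrfwa, hmowb⟩, hab⟩, hpoab, hstab⟩, ⟨hbW, ⟨hpobc, hstbc⟩, hcW⟩, hloc⟩
  have hbc : b ≠ c := fun h => hpoirr b (h ▸ hpobc)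
  have hmobc : mo b c := by
    rcases hmototal b c hbW hcW hloc hbc with h | h
    · exact h
    · obtain ⟨t, htb, htc⟩ := hstbc
      exact absurd (hpotrans (hmoint c b h ⟨t, htc, htb⟩) hpobc) (hpoirr c)
  have haR : a ∈ R := (hrfWR w a hrfwa).2
  have hac : a ≠ c := fun h => Set.eq_empty_iff_forall_notMem.mp hRW a ⟨haR, h ▸ hcW⟩
  refine ⟨⟨⟨w, hrfwa, hmotrans hmowb hmobc⟩, hac⟩, hpotrans hpoab hpobc, ?_⟩
  obtain ⟨t, hta, htb⟩ := hstab
  obtain ⟨t', htb', htc⟩ := hstbc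
  exact ⟨t, hta, by rw [htc, ← htb', htb]⟩
end

section
/- Assume: every event is transactional (NT = ∅); INT holds (rf_i ∪ mo_i ∪ fr_i ⊆ po); rf ⊆ W × R and loc a = loc b for every (a,b) ∈ rf; and mo ⊆ W × W and loc a = loc b for every (a,b) ∈ mo. Then mo ⊆ rsi-hb|loc, and fr ⊆ rsi-hb|loc ∪ (fr ∩ po_i). -/
variable {E : Type*} {TxId : Type*} {Loc : Type*}

/-- if every event is transactional, INT holds, and `rf` and `mo` are
well-formed same-location relations, then `mo ⊆ rsi-hb|loc` and
`fr ⊆ rsi-hb|loc ∪ (fr ∩ po_i)`. -/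
theorem stmt9 {E TxId Loc : Type*} (R W : Set E) (loc : E → Loc)
    (tx : E → Option TxId) (po rf mo : E → E → Prop)
    (hNT : NTset tx = ∅)
    (hINT : INTax tx po rf mo)
    (hrfWR : ∀ a b, rf a b → a ∈ W ∧ b ∈ R)
    (hrfloc : ∀ a b, rf a b → loc a = loc b)
    (hmoWW : ∀ a b, mo a b → a ∈ W ∧ b ∈ W)
    (hmoloc : ∀ a b, mo a b → loc a = loc b) :
    (∀ a b, mo a b → RsiHb tx W po rf mo a b ∧ loc a = loc b) ∧
    (∀ a b, Fr rf mo a b →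
      (RsiHb tx W po rf mo a b ∧ loc a = loc b) ∨
      (Fr rf mo a b ∧ (po a b ∧ St tx a b))) := by
  have hst : ∀ e : E, St tx e e := by
    intro e
    have : e ∉ NTset tx := by rw [hNT]; exact Set.notMem_empty e
    cases h : tx e with
    | none => exact absurd h this
    | some t => exact ⟨t, h, h⟩
  constructor
  · intro a b hmo
    refine ⟨?_, hmoloc a b hmo⟩
    by_cases hs : St tx a b
    · exact Relation.TransGen.single (Or.inl (Or.inr
        ⟨(hmoWW a b hmo).1, ⟨hINT a b (Or.inr (Or.inl hmo)) hs, hs⟩, (hmoWW a b hmo).2⟩))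
    · exact Relation.TransGen.single (Or.inr (Or.inr (Or.inl
        ⟨a, b, hst a, hmo, hs, hst b⟩)))
  · intro a b hfr
    by_cases hs : St tx a b
    · exact Or.inr ⟨hfr, hINT a b (Or.inr (Or.inr hfr)) hs, hs⟩
    · obtain ⟨⟨w, hrf, hmo⟩, hne⟩ := hfr
      have hloc : loc a = loc b := (hrfloc w a hrf).symm.trans (hmoloc w b hmo)
      refine Or.inl ⟨?_, hloc⟩
      by_cases hwa : St tx w a
      · have hwb : ¬ St tx w b := by
          rintro ⟨t, h1, h2⟩
          obtain ⟨t', h3, h4⟩ := hwa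
          rw [h1] at h3
          exact hs ⟨t, h4.trans (Option.some_inj.mp h3 ▸ rfl), h2⟩
        have hsaw : St tx a w := by obtain ⟨t, h1, h2⟩ := hwa; exact ⟨t, h2, h1⟩
        exact Relation.TransGen.single (Or.inr (Or.inr (Or.inl
          ⟨w, b, hsaw, hmo, hwb, hst b⟩)))
      · exact Relation.TransGen.single (Or.inr (Or.inr (Or.inr
          ⟨⟨w, hrf, hwa⟩, ⟨a, b, hst a, ⟨⟨w, hrf, hmo⟩, hne⟩, hs, hst b⟩, (hmoWW w b hmo).2⟩)))
end

section
/- If every event is transactional (tx e ≠ none for all e), then the transaction lifting of mo ; rf is contained in the transitive closure of mo_T ∪ rf_T, i.e. (mo ; rf)_T ⊆ (mo_T ∪ rf_T)⁺. -/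
variable {E : Type*} {TxId : Type*} {Loc : Type*}

/-- if every event is transactional, then
`(mo ; rf)_T ⊆ (mo_T ∪ rf_T)⁺`. -/
theorem stmt11 {E TxId : Type*} (tx : E → Option TxId) (rf mo : E → E → Prop)
    (htx : ∀ e, tx e ≠ none) :
    ∀ a b, RLift tx (fun x y => ∃ z, mo x z ∧ rf z y) a b →
      Relation.TransGen (fun x y => RLift tx mo x y ∨ RLift tx rf x y) a b := by
  rintro a b ⟨c, d, hac, ⟨z, hmo, hrf⟩, hncd, hdb⟩
  obtain ⟨tz, htz⟩ := Option.ne_none_iff_exists'.mp (htx z)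
  by_cases hcz : St tx c z
  · -- st c z, so ¬ st z d (else st c d)
    have hnzd : ¬ St tx z d := by
      rintro ⟨t, h1, h2⟩
      obtain ⟨t', hc, hz⟩ := hcz
      exact hncd ⟨t, by rw [hc]; rw [hz] at h1; exact h1, h2⟩
    refine Relation.TransGen.single (Or.inr ⟨z, d, ?_, hrf, hnzd, hdb⟩)
    obtain ⟨t, h1, h2⟩ := hac
    obtain ⟨t', h3, h4⟩ := hcz
    exact ⟨t, h1, by rw [h4]; rw [h3] at h2; exact h2 ▸ rfl⟩
  · by_cases hzd : St tx z d
    · refine Relation.TransGen.single (Or.inl ⟨c, z, hac, hmo, hcz, ?_⟩)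
      obtain ⟨t, h1, h2⟩ := hzd
      obtain ⟨t', h3, h4⟩ := hdb
      exact ⟨t, h1, by rw [h4]; rw [h3] at h2; exact h2⟩
    · have hnzd : ¬ St tx z d := hzd
      exact Relation.TransGen.head (Or.inl ⟨c, z, hac, hmo, hcz, ⟨tz, htz, htz⟩⟩)
        (Relation.TransGen.single (Or.inr ⟨z, d, ⟨tz, htz, htz⟩, hrf, hnzd, hdb⟩))
end

section
/- (Lock ordering, WWSync.) Under the lock-event setting and lock axioms: (i) for all wl, wl' ∈ WL and wu, wu' ∈ WU with (wl,wu) ∈ imm(po_L), (wl',wu') ∈ imm(po_L) and wl ≠ wl', either (wu,wl') ∈ lo or (wu',wl) ∈ lo; (ii) for all wl ∈ WL, rl ∈ RL, pl ∈ PL and wu, wu' ∈ WU with (wl,wu) ∈ imm(po_L), (rl,pl) ∈ imm(po_L) and (pl,wu') ∈ imm(po_L), either (wu,rl) ∈ lo or (wu',wl) ∈ lo; (iii) for all rl, rl' ∈ RL, pl, pl' ∈ PL and wu, wu' ∈ WU with (rl,pl), (pl,wu) ∈ imm(po_L), (rl',pl'), (pl',wu') ∈ imm(po_L) and rl ≠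 rl', either (wu,rl') ∈ lo or (wu',rl) ∈ lo. -/
variable {E : Type*}

/-- The set of all lock events for the fixed location. -/
def LockSet (RL RU WL PL WU : Set E) : Set E := RL ∪ RU ∪ WL ∪ PL ∪ WU

/-- `imm(po_L)`: immediate program-order edges between lock events. -/
def ImmPoL (L : Set E) (po : E → E → Prop) : E → E → Prop :=
  fun a b => po a b ∧ a ∈ L ∧ b ∈ L ∧ ¬ ∃ c, c ∈ L ∧ po a c ∧ po c b

/-- Lock ordering, WWSync. -/
theorem stmt12 {E : Type*} (RL RU WL PL WU : Set E) (po lo : E → E → Prop)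
    (hdisj : List.Pairwise Disjoint ([RL, RU, WL, PL, WU] : List (Set E)))
    (hpotrans : Transitive po) (hpoirr : Irreflexive po)
    (hpofwd : ∀ a b c, po a b → po a c → b = c ∨ po b c ∨ po c b)
    (hpobwd : ∀ a b c, po a c → po b c → a = b ∨ po a b ∨ po b a)
    (hloL : ∀ a b, lo a b →
      a ∈ LockSet RL RU WL PL WU ∧ b ∈ LockSet RL RU WL PL WU)
    (hlotrans : Transitive lo)
    (hacyc : ∀ a, ¬ Relation.TransGen (fun x y => po x y ∨ lo x y) a a)
    (hwsync : ∀ a b, a ∈ LockSet RL RU WL PL WU → b ∈ LockSet RL RU WL PL WU →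
      a ≠ b → (a ∈ WL ∪ PL ∪ WU ∨ b ∈ WL ∪ PL ∪ WU) → lo a b ∨ lo b a)
    (hwex : ∀ wl e, wl ∈ WL ∪ PL → e ∈ LockSet RL RU WL PL WU → lo wl e →
      ∃ wu ∈ WU, po wl wu ∧ (wu = e ∨ lo wu e))
    (hrshared : ∀ rl e, rl ∈ RL → e ∈ LockSet RL RU WL PL WU → lo rl e →
      ∃ l ∈ RU ∪ PL, po rl l ∧ (l = e ∨ lo l e)) :
    (∀ wl wl' wu wu', wl ∈ WL → wl' ∈ WL → wu ∈ WU → wu' ∈ WU →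
      ImmPoL (LockSet RL RU WL PL WU) po wl wu →
      ImmPoL (LockSet RL RU WL PL WU) po wl' wu' →
      wl ≠ wl' → lo wu wl' ∨ lo wu' wl) ∧
    (∀ wl rl pl wu wu', wl ∈ WL → rl ∈ RL → pl ∈ PL → wu ∈ WU → wu' ∈ WU →
      ImmPoL (LockSet RL RU WL PL WU) po wl wu →
      ImmPoL (LockSet RL RU WL PL WU) po rl pl →
      ImmPoL (LockSet RL RU WL PL WU) po pl wu' →
      lo wu rl ∨ lo wu' wl) ∧
    (∀ rl rl' pl pl' wu wu', rl ∈ RL → rl' ∈ RL → pl ∈ PL → pl' ∈ PL →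
      wu ∈ WU → wu' ∈ WU →
      ImmPoL (LockSet RL RU WL PL WU) po rl pl →
      ImmPoL (LockSet RL RU WL PL WU) po pl wu →
      ImmPoL (LockSet RL RU WL PL WU) po rl' pl' →
      ImmPoL (LockSet RL RU WL PL WU) po pl' wu' →
      rl ≠ rl' → lo wu rl' ∨ lo wu' rl) := by
    -- unpack disjointness
  simp only [List.pairwise_cons, List.mem_cons, List.not_mem_nil, List.mem_singleton,
    forall_eq_or_imp, forall_eq, and_true] at hdisj
  obtain ⟨⟨dRLRU, dRLWL, dRLPL, dRLWU, -⟩, ⟨dRUWL, dRUPL, dRUWU, -⟩,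
    ⟨dWLPL, dWLWU, -⟩, ⟨dPLWU, -⟩, -⟩ := hdisj
  have neq : ∀ {A B : Set E}, Disjoint A B → ∀ {x}, x ∈ A → ∀ {y}, y ∈ B → x ≠ y := by
    intro A B h x hx y hy hxy
    exact Set.disjoint_left.mp h hx (hxy ▸ hy)
  set L := LockSet RL RU WL PL WU with hLdef
  have memL : ∀ {x}, x ∈ RL ∨ x ∈ RU ∨ x ∈ WL ∨ x ∈ PL ∨ x ∈ WU → x ∈ L := by
    intro x h; simp only [hLdef, LockSet, Set.mem_union]; tauto
  -- Lemma A: writer critical section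
  have lemA : ∀ wl wu e, wl ∈ WL ∪ PL → wu ∈ WU → ImmPoL L po wl wu → e ∈ L →
      e ≠ wu → lo wl e → lo wu e := by
    intro wl wu e hwl hwu himm heL hne hlo
    obtain ⟨hpo1, hwlL, hwuL, himm'⟩ := himm
    obtain ⟨v, hvWU, hpov, hve⟩ := hwex wl e hwl heL hlo
    by_cases hv : v = wu
    · subst hv
      rcases hve with h | h
      · exact absurd h.symm hne
      · exact h
    · rcases hpofwd wl wu v hpo1 hpov with h | h | h
      · exact absurd h.symm hv
      · -- po wu v
        rcases hwsync wu e hwuL heL (Ne.symm hne) (Or.inl (Or.inr hwu)) with h' | h'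
        · exact h'
        · exfalso
          rcases hve with hveq | hvlo
          · exact hacyc e (Relation.TransGen.head (Or.inr h')
              (Relation.TransGen.single (Or.inl (hveq ▸ h))))
          · exact hacyc e (Relation.TransGen.head (Or.inr h')
              (Relation.TransGen.head (Or.inl h) (Relation.TransGen.single (Or.inr hvlo))))
      · exact absurd ⟨v, memL (Or.inr (Or.inr (Or.inr (Or.inr hvWU)))), hpov, h⟩ himm'
  -- Lemma B: reader critical section (via promotion)
  have lemB : ∀ rl pl wu e, rl ∈ RL → pl ∈ PL → wu ∈ WU → ImmPoL L po rl pl →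
      ImmPoL L po pl wu → e ∈ L → e ≠ wu → e ≠ pl → lo rl e → lo wu e := by
    intro rl pl wu e hrl hpl hwu himm1 himm2 heL hne hnep hlo
    obtain ⟨hpo1, hrlL, hplL, himm1'⟩ := himm1
    have hple : lo pl e := by
      obtain ⟨l, hlRUPL, hpol, hle⟩ := hrshared rl e hrl heL hlo
      have hlL : l ∈ L := by
        rcases hlRUPL with h | h
        · exact memL (Or.inr (Or.inl h))
        · exact memL (Or.inr (Or.inr (Or.inr (Or.inl h))))
      by_cases hl : l = pl
      · subst hl
        rcases hle with h | h
        · exact absurd h.symm hnep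
        · exact h
      · rcases hpofwd rl pl l hpo1 hpol with h | h | h
        · exact absurd h.symm hl
        · rcases hwsync pl e hplL heL (Ne.symm hnep)
            (Or.inl (Or.inl (Or.inr hpl))) with h' | h'
          · exact h'
          · exfalso
            rcases hle with hleq | hllo
            · exact hacyc e (Relation.TransGen.head (Or.inr h')
                (Relation.TransGen.single (Or.inl (hleq ▸ h))))
            · exact hacyc e (Relation.TransGen.head (Or.inr h')
                (Relation.TransGen.head (Or.inl h) (Relation.TransGen.single (Or.inr hllo))))
        · exact absurd ⟨l, hlL, hpol, h⟩ himm1'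
    exact lemA pl wu e (Or.inr hpl) hwu himm2 heL hne hple
  refine ⟨?_, ?_, ?_⟩
  · -- part (i)
    intro wl wl' wu wu' hwl hwl' hwu hwu' h1 h2 hne
    rcases hwsync wl wl' (memL (Or.inr (Or.inr (Or.inl hwl))))
        (memL (Or.inr (Or.inr (Or.inl hwl')))) hne
        (Or.inl (Or.inl (Or.inl hwl))) with h | h
    · exact Or.inl (lemA wl wu wl' (Or.inl hwl) hwu h1
        (memL (Or.inr (Or.inr (Or.inl hwl')))) (neq dWLWU hwl' hwu) h)
    · exact Or.inr (lemA wl' wu' wl (Or.inl hwl') hwu' h2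
        (memL (Or.inr (Or.inr (Or.inl hwl)))) (neq dWLWU hwl hwu') h)
  · -- part (ii)
    intro wl rl pl wu wu' hwl hrl hpl hwu hwu' h1 h2 h3
    rcases hwsync wl rl (memL (Or.inr (Or.inr (Or.inl hwl)))) (memL (Or.inl hrl))
        (Ne.symm (neq dRLWL hrl hwl)) (Or.inl (Or.inl (Or.inl hwl))) with h | h
    · exact Or.inl (lemA wl wu rl (Or.inl hwl) hwu h1 (memL (Or.inl hrl))
        (neq dRLWU hrl hwu) h)
    · exact Or.inr (lemB rl pl wu' wl hrl hpl hwu' h2 h3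
        (memL (Or.inr (Or.inr (Or.inl hwl)))) (neq dWLWU hwl hwu')
        (neq dWLPL hwl hpl) h)
  · -- part (iii)
    intro rl rl' pl pl' wu wu' hrl hrl' hpl hpl' hwu hwu' h1 h2 h3 h4 hne
    rcases hwsync pl rl' (memL (Or.inr (Or.inr (Or.inr (Or.inl hpl)))))
        (memL (Or.inl hrl')) (Ne.symm (neq dRLPL hrl' hpl))
        (Or.inl (Or.inl (Or.inr hpl))) with h | h
    · exact Or.inl (lemA pl wu rl' (Or.inr hpl) hwu h2 (memL (Or.inl hrl'))
        (neq dRLWU hrl' hwu) h)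
    · -- lo rl' pl
      have hplne : pl ≠ pl' := by
        intro heq
        subst heq
        obtain ⟨hp1, _, _, hi1⟩ := h1
        obtain ⟨hp3, _, _, hi3⟩ := h3
        rcases hpobwd rl rl' pl hp1 hp3 with h' | h' | h'
        · exact hne h'
        · exact hi1 ⟨rl', memL (Or.inl hrl'), h', hp3⟩
        · exact hi3 ⟨rl, memL (Or.inl hrl), h', hp1⟩
      have hwune : wu ≠ wu' := by
        intro heq
        subst heq
        obtain ⟨hp2, _, _, hi2⟩ := h2
        obtain ⟨hp4, _, _, hi4⟩ := h4
        rcases hpobwd pl pl' wu hp2 hp4 with h' | h' | h'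
        · exact hplne h'
        · exact hi2 ⟨pl', memL (Or.inr (Or.inr (Or.inr (Or.inl hpl')))), h', hp4⟩
        · exact hi4 ⟨pl, memL (Or.inr (Or.inr (Or.inr (Or.inl hpl)))), h', hp2⟩
      have hlo1 : lo wu' pl := lemB rl' pl' wu' pl hrl' hpl' hwu' h3 h4
        (memL (Or.inr (Or.inr (Or.inr (Or.inl hpl))))) (neq dPLWU hpl hwu') hplne h
      rcases hwsync wu' rl (memL (Or.inr (Or.inr (Or.inr (Or.inr hwu')))))
          (memL (Or.inl hrl)) (Ne.symm (neq dRLWU hrl hwu'))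
          (Or.inl (Or.inr hwu')) with h' | h'
      · exact Or.inr h'
      · exfalso
        have hlo2 : lo wu wu' := lemB rl pl wu wu' hrl hpl hwu h1 h2
          (memL (Or.inr (Or.inr (Or.inr (Or.inr hwu'))))) (Ne.symm hwune)
          (Ne.symm (neq dPLWU hpl hwu')) h'
        have hlo3 : lo wu pl := hlotrans hlo2 hlo1
        exact hacyc pl (Relation.TransGen.head (Or.inl h2.1)
          (Relation.TransGen.single (Or.inr hlo3)))
end

section
/- (Lock ordering, RWSync.) Under the lock-event setting and lock axioms: (i) for all wl ∈ WL, wu ∈ WU, rl ∈ RL and ru ∈ RU with (wl,wu) ∈ imm(po_L) and (rl,ru) ∈ imm(po_L), either (wu,rl) ∈ lo or (ru,wl) ∈ lo; (ii) for all rl, rl' ∈ RL, pl ∈ PL, wu ∈ WU and ru ∈ RU with (rl,pl), (pl,wu) ∈ imm(po_L) and (rl',ru) ∈ imm(po_L), either (wu,rl') ∈ lo or (ru,pl) ∈ lo. -/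
variable {E : Type*}

/-- Lock ordering, RWSync. -/
theorem stmt13 {E : Type*} (RL RU WL PL WU : Set E) (po lo : E → E → Prop)
    (hdisj : List.Pairwise Disjoint ([RL, RU, WL, PL, WU] : List (Set E)))
    (hpotrans : Transitive po) (hpoirr : Irreflexive po)
    (hpofwd : ∀ a b c, po a b → po a c → b = c ∨ po b c ∨ po c b)
    (hpobwd : ∀ a b c, po a c → po b c → a = b ∨ po a b ∨ po b a)
    (hloL : ∀ a b, lo a b →
      a ∈ LockSet RL RU WL PL WU ∧ b ∈ LockSet RL RU WL PL WU)
    (hlotrans : Transitive lo)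
    (hacyc : ∀ a, ¬ Relation.TransGen (fun x y => po x y ∨ lo x y) a a)
    (hwsync : ∀ a b, a ∈ LockSet RL RU WL PL WU → b ∈ LockSet RL RU WL PL WU →
      a ≠ b → (a ∈ WL ∪ PL ∪ WU ∨ b ∈ WL ∪ PL ∪ WU) → lo a b ∨ lo b a)
    (hwex : ∀ wl e, wl ∈ WL ∪ PL → e ∈ LockSet RL RU WL PL WU → lo wl e →
      ∃ wu ∈ WU, po wl wu ∧ (wu = e ∨ lo wu e))
    (hrshared : ∀ rl e, rl ∈ RL → e ∈ LockSet RL RU WL PL WU → lo rl e →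
      ∃ l ∈ RU ∪ PL, po rl l ∧ (l = e ∨ lo l e)) :
    (∀ wl wu rl ru, wl ∈ WL → wu ∈ WU → rl ∈ RL → ru ∈ RU →
      ImmPoL (LockSet RL RU WL PL WU) po wl wu →
      ImmPoL (LockSet RL RU WL PL WU) po rl ru →
      lo wu rl ∨ lo ru wl) ∧
    (∀ rl rl' pl wu ru, rl ∈ RL → rl' ∈ RL → pl ∈ PL → wu ∈ WU → ru ∈ RU →
      ImmPoL (LockSet RL RU WL PL WU) po rl pl →
      ImmPoL (LockSet RL RU WL PL WU) po pl wu →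
      ImmPoL (LockSet RL RU WL PL WU) po rl' ru →
      lo wu rl' ∨ lo ru pl) := by
  simp only [List.pairwise_cons, List.mem_cons, List.mem_singleton, List.not_mem_nil,
    forall_eq_or_imp, forall_eq, List.Pairwise.nil, and_true] at hdisj
  obtain ⟨⟨d12, d13, d14, d15⟩, ⟨d23, d24, d25⟩, ⟨d34, d35⟩, d45, -⟩ := hdisj
  replace d15 := d15.1
  have hne : ∀ {A B : Set E}, Disjoint A B → ∀ {a b : E}, a ∈ A → b ∈ B → a ≠ b := by
    intro A B h a b ha hb heq
    exact Set.disjoint_left.mp h ha (heq ▸ hb)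
  have memL : ∀ {x : E}, (x ∈ RL ∨ x ∈ RU ∨ x ∈ WL ∨ x ∈ PL ∨ x ∈ WU) →
      x ∈ LockSet RL RU WL PL WU := by
    intro x hx
    simp only [LockSet, Set.mem_union]
    tauto
  have memW : ∀ {x : E}, (x ∈ WL ∨ x ∈ PL ∨ x ∈ WU) → x ∈ WL ∪ PL ∪ WU := by
    intro x hx
    simp only [Set.mem_union]
    tauto
  have cyc2 : ∀ a b, lo a b → po b a → False := by
    intro a b h1 h2
    exact hacyc a (Relation.TransGen.head (Or.inr h1) (Relation.TransGen.single (Or.inl h2)))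
  have cyc3 : ∀ a b c, lo a b → po b c → lo c a → False := by
    intro a b c h1 h2 h3
    exact hacyc a (Relation.TransGen.head (Or.inr h1)
      (Relation.TransGen.head (Or.inl h2) (Relation.TransGen.single (Or.inr h3))))
  constructor
  · intro wl wu rl ru hwl hwu hrl hru himm1 himm2
    obtain ⟨hpo1, hwlL, hwuL, hnimm1⟩ := himm1
    obtain ⟨hpo2, hrlL, hruL, hnimm2⟩ := himm2
    rcases hwsync wl rl hwlL hrlL (Ne.symm (hne d13 hrl hwl))
        (Or.inl (memW (Or.inl hwl))) with hl | hl
    · -- lo wl rl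
      obtain ⟨wu', hwu', hpo', hcase⟩ := hwex wl rl (Or.inl hwl) hrlL hl
      have hlo' : lo wu' rl := by
        rcases hcase with rfl | h
        · exact absurd rfl (Ne.symm (hne d15 hrl hwu'))
        · exact h
      rcases hpofwd wl wu wu' hpo1 hpo' with rfl | h | h
      · exact Or.inl hlo'
      · -- po wu wu'
        rcases hwsync wu rl hwuL hrlL (Ne.symm (hne d15 hrl hwu))
            (Or.inl (memW (Or.inr (Or.inr hwu)))) with h2 | h2
        · exact Or.inl h2
        · exact absurd (cyc3 rl wu wu' h2 h hlo') id
      · -- po wu' wu : contradicts immediacy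
        exact absurd ⟨wu', memL (Or.inr (Or.inr (Or.inr (Or.inr hwu')))), hpo', h⟩ hnimm1
    · -- lo rl wl
      obtain ⟨l, hlmem, hpo', hcase⟩ := hrshared rl wl hrl hwlL hl
      have hlL : l ∈ LockSet RL RU WL PL WU := by
        rcases hlmem with h | h
        · exact memL (Or.inr (Or.inl h))
        · exact memL (Or.inr (Or.inr (Or.inr (Or.inl h))))
      have hlo' : lo l wl := by
        rcases hcase with rfl | h
        · rcases hlmem with h | h
          · exact absurd rfl (hne d23 h hwl)
          · exact absurd rfl (Ne.symm (hne d34 hwl h))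
        · exact h
      rcases hpofwd rl ru l hpo2 hpo' with heq | h | h
      · exact Or.inr (heq ▸ hlo')
      · -- po ru l
        rcases hwsync ru wl hruL hwlL (hne d23 hru hwl)
            (Or.inr (memW (Or.inl hwl))) with h2 | h2
        · exact Or.inr h2
        · exact absurd (cyc3 wl ru l h2 h hlo') id
      · -- po l ru : contradicts immediacy
        exact absurd ⟨l, hlL, hpo', h⟩ hnimm2
  · intro rl rl' pl wu ru hrl hrl' hpl hwu hru himm1 himm2 himm3
    obtain ⟨hpoA, hrlL, hplL, hnimm1⟩ := himm1
    obtain ⟨hpoB, -, hwuL, hnimm2⟩ := himm2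
    obtain ⟨hpoC, hrl'L, hruL, hnimm3⟩ := himm3
    rcases hwsync pl rl' hplL hrl'L (Ne.symm (hne d14 hrl' hpl))
        (Or.inl (memW (Or.inr (Or.inl hpl)))) with hl | hl
    · -- lo pl rl'
      obtain ⟨wu', hwu', hpo', hcase⟩ := hwex pl rl' (Or.inr hpl) hrl'L hl
      have hlo' : lo wu' rl' := by
        rcases hcase with rfl | h
        · exact absurd rfl (Ne.symm (hne d15 hrl' hwu'))
        · exact h
      rcases hpofwd pl wu wu' hpoB hpo' with rfl | h | h
      · exact Or.inl hlo'
      · rcases hwsync wu rl' hwuL hrl'L (Ne.symm (hne d15 hrl' hwu))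
            (Or.inl (memW (Or.inr (Or.inr hwu)))) with h2 | h2
        · exact Or.inl h2
        · exact absurd (cyc3 rl' wu wu' h2 h hlo') id
      · exact absurd ⟨wu', memL (Or.inr (Or.inr (Or.inr (Or.inr hwu')))), hpo', h⟩ hnimm2
    · -- lo rl' pl
      obtain ⟨l, hlmem, hpo', hcase⟩ := hrshared rl' pl hrl' hplL hl
      have hlL : l ∈ LockSet RL RU WL PL WU := by
        rcases hlmem with h | h
        · exact memL (Or.inr (Or.inl h))
        · exact memL (Or.inr (Or.inr (Or.inr (Or.inl h))))
      rcases hcase with rfl | hlo'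
      · -- l = pl, so po rl' pl
        rcases hpofwd rl' ru l hpoC hpo' with heq | h | h
        · exact absurd heq (hne d24 hru hpl)
        · -- po ru pl
          rcases hwsync ru l hruL hlL (hne d24 hru hpl)
              (Or.inr (memW (Or.inr (Or.inl hpl)))) with h2 | h2
          · exact Or.inr h2
          · exact absurd (cyc2 l ru h2 h) id
        · exact absurd ⟨l, hlL, hpo', h⟩ hnimm3
      · rcases hpofwd rl' ru l hpoC hpo' with heq | h | h
        · exact Or.inr (heq ▸ hlo')
        · rcases hwsync ru pl hruL hplL (hne d24 hru hpl)
              (Or.inr (memW (Or.inr (Or.inl hpl)))) with h2 | h2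
          · exact Or.inr h2
          · exact absurd (cyc3 pl ru l h2 h hlo') id
        · exact absurd ⟨l, hlL, hpo', h⟩ hnimm3
end

section
/- Let r and s be binary relations on a type such that the composition s ; s is empty. If the transitive closure of r ; (s ∪ id) is irreflexive, then the transitive closure of r ∪ s is irreflexive. (Equivalently: any cycle in r ∪ s, given that no two s-edges can be adjacent, yields a cycle in r ; s^?.) -/
/-!
Split a cycle of `r ∪ s` at its `s`-edges. Since no two `s`-edges are adjacent, every `s`-edge
except possibly the first one is preceded by an `r`-edge, and the pair is a single `r ; s^?`-step.
So a path of `r ∪ s` is an `r ; s^?`-path, possibly preceded by one `s`-edge. For a cycle, that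
leading `s`-edge can be attached to the last `r`-edge of the cycle, giving an `r ; s^?`-cycle.
-/

namespace Relation

variable {α : Type*} {r s : α → α → Prop}

/-- The relation `r ; s^?`. -/
def CompReflGen (r s : α → α → Prop) (x z : α) : Prop :=
  ∃ y, r x y ∧ (s y z ∨ y = z)

theorem transGen_compReflGen_or_exists_of_transGen_or (hss : ∀ a b c, s a b → s b c → False)
    {a b : α} (h : TransGen (fun x y => r x y ∨ s x y) a b) :
    TransGen (CompReflGen r s) a b ∨ ∃ c, s a c ∧ ReflTransGen (CompReflGen r s) c b := by
  induction h using TransGen.head_induction_on with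
  | single hab =>
    rcases hab with hab | hab
    · exact .inl (.single ⟨_, hab, .inr rfl⟩)
    · exact .inr ⟨_, hab, .refl⟩
  | @head x y hxy _ ih =>
    rcases hxy with hxy | hxy
    · rcases ih with ih | ⟨c, hyc, hcb⟩
      · exact .inl (.head ⟨y, hxy, .inr rfl⟩ ih)
      · exact .inl (.head' ⟨y, hxy, .inl hyc⟩ hcb)
    · rcases ih with ih | ⟨c, hyc, -⟩
      · exact .inr ⟨y, hxy, ih.to_reflTransGen⟩
      · exact (hss _ _ _ hxy hyc).elim

theorem not_rel_of_reflTransGen_compReflGen (hss : ∀ a b c, s a b → s b c → False)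
    (hacyc : ∀ a, ¬ TransGen (CompReflGen r s) a a) {a c : α}
    (hca : ReflTransGen (CompReflGen r s) c a) : ¬ s a c := by
  intro hac
  rcases hca.cases_tail with rfl | ⟨x, hcx, y, hxy, hya | rfl⟩
  · exact hss _ _ _ hac hac
  · exact hss _ _ _ hya hac
  · exact hacyc c (.tail' hcx ⟨y, hxy, .inl hac⟩)

end Relation

/-- if `s ; s = ∅` and `r ; s^?` is acyclic, then `r ∪ s` is acyclic. -/
theorem stmt14 {α : Type*} (r s : α → α → Prop)
    (hss : ∀ a b c, s a b → s b c → False)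
    (hacyc : ∀ a, ¬ Relation.TransGen (fun x z => ∃ y, r x y ∧ (s y z ∨ y = z)) a a) :
    ∀ a, ¬ Relation.TransGen (fun x y => r x y ∨ s x y) a a := by
  intro a ha
  rcases Relation.transGen_compReflGen_or_exists_of_transGen_or hss ha with h | ⟨c, hac, hca⟩
  · exact hacyc a h
  · exact Relation.not_rel_of_reflTransGen_compReflGen hss hacyc hca hac
end

section
/- (Class-bridging transfer.) Let E be a type, cls : E → C a function assigning each element a class, H a transitive binary relation on E, and S a binary relation on E such that for every (a,b) ∈ S: cls a ≠ cls b, and there exists d with cls d = cls b such that (c,d) ∈ H for every c with cls c = cls a. Then for every (a,b) in the transitive closure of S, there exists d with cls d = cls b such that (c,d) ∈ H for every c with cls c = cls a. -/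
/-- Class-bridging transfer: if every `S`-edge `(a,b)` bridges distinct
classes and admits a witness `d` in the class of `b` that is `H`-above the whole class of
`a`, then the same holds for every edge of the transitive closure of `S`. -/
theorem stmt15 {E C : Type*} (cls : E → C) (H S : E → E → Prop)
    (hH : Transitive H)
    (hS : ∀ a b, S a b → cls a ≠ cls b ∧
      ∃ d, cls d = cls b ∧ ∀ c, cls c = cls a → H c d) :
    ∀ a b, Relation.TransGen S a b →
      ∃ d, cls d = cls b ∧ ∀ c, cls c = cls a → H c d := by
  intro a b h
  induction h with
  | single hab => exact (hS _ _ hab).2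
  | tail _ hbc ih =>
      obtain ⟨d, hd, hdall⟩ := ih
      obtain ⟨_, d', hd', hd'all⟩ := hS _ _ hbc
      exact ⟨d', hd', fun c' hc' => hH (hdall c' hc') (hd'all d hd)⟩
end
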